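/- arXiv:2407.18633 — 5 statements merged into one kernel-verified Lean document; each statement's English description precedes it below -/
import Mathlib

section
/- For a triangular array (X_{nk})_{1≤k≤k_n, n∈ℕ} of square-integrable ℝ^d-valued random vectors adapted to σ-fields (F_{nk}), condition (M₂^d): E(max_{1≤k≤k_n} ‖X_{nk}‖²) → 0 implies the conditional Lindeberg condition (CLB^d): for every ε > 0, ∑_{k=1}^{k_n} E(‖X_{nk}‖² 1_{{‖X_{nk}‖ ≥ ε}} | F_{n,k-1}) → 0 in probability as n → ∞. -/
/-!
Let `τ` be the first index `k ≥ 1` with `‖Xₖ‖ ≥ ε` and `Yₖ = ‖Xₖ‖² 1{‖Xₖ‖ ≥ ε}`. Since `{k ≤ τ}` is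
`𝓕ₖ₋₁`-measurable,
`E ∑ₖ 1{k ≤ τ} E(Yₖ | 𝓕ₖ₋₁) = E ∑ₖ 1{k ≤ τ} Yₖ = E(‖X_τ‖²; τ ≤ K) ≤ E maxₖ ‖Xₖ‖²`.
On `{maxₖ ‖Xₖ‖² < ε²}` all the indicators `1{k ≤ τ}` equal one, so there the truncated sum is the
conditional Lindeberg sum. Markov's inequality, applied to both, gives
`P(∑ₖ E(Yₖ | 𝓕ₖ₋₁) ≥ δ) ≤ (1/δ + 1/ε²) E maxₖ ‖Xₖ‖²`, which tends to zero under (M₂).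
-/

open MeasureTheory Filter

theorem Finset.sum_indicator_le_sup'_of_pairwiseDisjoint {ι α M : Type*} [AddCommMonoid M]
    [SemilatticeSup M] {s : Finset ι} (hs : s.Nonempty) {A : ι → Set α}
    (hA : (s : Set ι).PairwiseDisjoint A) {g : ι → α → M} {x : α} (hg : ∀ k ∈ s, 0 ≤ g k x) :
    ∑ k ∈ s, (A k).indicator (g k) x ≤ s.sup' hs fun k => g k x := by
  by_cases hx : ∃ k ∈ s, x ∈ A k
  · obtain ⟨k, hk, hxk⟩ := hx
    rw [Finset.sum_eq_single_of_mem k hk fun j hj hjk =>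
      Set.indicator_of_notMem (fun hxj => Set.disjoint_left.mp (hA hj hk hjk) hxj hxk) _,
      Set.indicator_of_mem hxk]
    exact Finset.le_sup' (fun k => g k x) hk
  · push Not at hx
    rw [Finset.sum_eq_zero fun k hk => Set.indicator_of_notMem (hx k hk) _]
    obtain ⟨k, hk⟩ := hs
    exact (hg k hk).trans (Finset.le_sup' (fun k => g k x) hk)

theorem MeasureTheory.Integrable.finset_sup' {ι α β : Type*} {m : MeasurableSpace α}
    {μ : Measure α} [NormedAddCommGroup β] [Lattice β] [HasSolidNorm β] [IsOrderedAddMonoid β]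
    {s : Finset ι} (hs : s.Nonempty) {f : ι → α → β} (hf : ∀ i ∈ s, Integrable (f i) μ) :
    Integrable (fun x => s.sup' hs fun i => f i x) μ :=
  (Finset.sup'_induction hs f (p := (Integrable · μ)) (fun _ h₁ _ h₂ => h₁.sup h₂) hf).congr
    (ae_of_all _ (Finset.sup'_apply hs f))

section TriangularRow

variable {Ω E : Type*} {m0 : MeasurableSpace Ω} [NormedAddCommGroup E]
  {𝓕 : ℕ → MeasurableSpace Ω} {X : ℕ → Ω → E} {ε : ℝ}

/-- The event `{k ≤ τ}`, where `τ` is the first index `j ≥ 1` with `ε ≤ ‖X j‖`. -/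
def noExceedanceBefore (X : ℕ → Ω → E) (ε : ℝ) (k : ℕ) : Set Ω :=
  {ω | ∀ j ∈ Finset.Ico 1 k, ‖X j ω‖ < ε}

theorem measurableSet_noExceedanceBefore (hmono : Monotone 𝓕)
    (hadapted : ∀ k, StronglyMeasurable[𝓕 k] (X k)) (k : ℕ) :
    MeasurableSet[𝓕 (k - 1)] (noExceedanceBefore X ε k) := by
  simp only [noExceedanceBefore, Set.ofPred_forall]
  refine MeasurableSet.iInter fun j => MeasurableSet.iInter fun hj => ?_
  have hjk : j ≤ k - 1 := by grind
  exact measurableSet_lt ((hadapted j).mono (hmono hjk)).norm.measurable measurable_const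

theorem pairwiseDisjoint_noExceedanceBefore_inter :
    (Set.Ici 1).PairwiseDisjoint fun k => noExceedanceBefore X ε k ∩ {ω | ε ≤ ‖X k ω‖} := by
  have key : ∀ j k, 1 ≤ j → j < k → Disjoint (noExceedanceBefore X ε k ∩ {ω | ε ≤ ‖X k ω‖})
      (noExceedanceBefore X ε j ∩ {ω | ε ≤ ‖X j ω‖}) := fun j k hj hjk =>
    Set.disjoint_left.mpr fun ω hk hj' =>
      (hk.1 j (Finset.mem_Ico.mpr ⟨hj, hjk⟩)).not_ge hj'.2
  intro j hj k hk hjk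
  rcases hjk.lt_or_gt with h | h
  · exact (key j k hj h).symm
  · exact key k j hk h

noncomputable def lindebergSummand (ε : ℝ) (f : Ω → E) : Ω → ℝ :=
  {ω | ε ≤ ‖f ω‖}.indicator fun ω => ‖f ω‖ ^ 2

theorem integrable_lindebergSummand {μ : Measure Ω} {f : Ω → E} (hf : StronglyMeasurable f)
    (hsq : Integrable (fun ω => ‖f ω‖ ^ 2) μ) : Integrable (lindebergSummand ε f) μ :=
  hsq.indicator (measurableSet_le measurable_const hf.norm.measurable)

theorem sum_indicator_lindebergSummand_le_sup' {K : ℕ} (hK : (Finset.Icc 1 K).Nonempty) (ω : Ω) :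
    ∑ k ∈ Finset.Icc 1 K, (noExceedanceBefore X ε k).indicator (lindebergSummand ε (X k)) ω
      ≤ (Finset.Icc 1 K).sup' hK fun k => ‖X k ω‖ ^ 2 := by
  simp only [lindebergSummand, Set.indicator_indicator]
  exact Finset.sum_indicator_le_sup'_of_pairwiseDisjoint hK
    (pairwiseDisjoint_noExceedanceBefore_inter.subset fun k hk => (Finset.mem_Icc.mp hk).1)
    fun _ _ => sq_nonneg _

theorem mem_noExceedanceBefore_of_sup'_lt (hε : 0 ≤ ε) {K : ℕ} (hK : (Finset.Icc 1 K).Nonempty)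
    {ω : Ω} (hω : ((Finset.Icc 1 K).sup' hK fun k => ‖X k ω‖ ^ 2) < ε ^ 2) {k : ℕ} (hk : k ≤ K) :
    ω ∈ noExceedanceBefore X ε k := fun j hj =>
  have hjK : j ∈ Finset.Icc 1 K := by grind
  lt_of_pow_lt_pow_left₀ 2 hε ((Finset.le_sup' (fun k => ‖X k ω‖ ^ 2) hjK).trans_lt hω)

theorem integral_sum_indicator_condExp_lindebergSummand_le {μ : Measure Ω} [IsFiniteMeasure μ]
    (hmono : Monotone 𝓕) (hle : ∀ k, 𝓕 k ≤ m0) (hadapted : ∀ k, StronglyMeasurable[𝓕 k] (X k))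
    (hsq : ∀ k, Integrable (fun ω => ‖X k ω‖ ^ 2) μ) {K : ℕ} (hK : (Finset.Icc 1 K).Nonempty) :
    ∫ ω, ∑ k ∈ Finset.Icc 1 K,
        (noExceedanceBefore X ε k).indicator (μ[lindebergSummand ε (X k) | 𝓕 (k - 1)]) ω ∂μ
      ≤ ∫ ω, (Finset.Icc 1 K).sup' hK (fun k => ‖X k ω‖ ^ 2) ∂μ := by
  have hB k : MeasurableSet (noExceedanceBefore X ε k) :=
    hle _ _ (measurableSet_noExceedanceBefore hmono hadapted k)
  have hY k : Integrable (lindebergSummand ε (X k)) μ :=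
    integrable_lindebergSummand ((hadapted k).mono (hle k)) (hsq k)
  have hY_nonneg k : 0 ≤ lindebergSummand ε (X k) :=
    Set.indicator_nonneg fun _ _ => sq_nonneg _
  have htower : ∫ ω, ∑ k ∈ Finset.Icc 1 K,
        (noExceedanceBefore X ε k).indicator (μ[lindebergSummand ε (X k) | 𝓕 (k - 1)]) ω ∂μ
      = ∫ ω, ∑ k ∈ Finset.Icc 1 K,
        (noExceedanceBefore X ε k).indicator (lindebergSummand ε (X k)) ω ∂μ := by
    rw [integral_finsetSum _ fun k _ => integrable_condExp.indicator (hB k),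
      integral_finsetSum _ fun k _ => (hY k).indicator (hB k)]
    refine Finset.sum_congr rfl fun k _ => ?_
    rw [integral_indicator (hB k), integral_indicator (hB k)]
    exact setIntegral_condExp (hle _) (hY k) (measurableSet_noExceedanceBefore hmono hadapted k)
  rw [htower]
  exact integral_mono_of_nonneg
    (ae_of_all _ fun ω => Finset.sum_nonneg fun k _ =>
      Set.indicator_nonneg (fun ω _ => hY_nonneg k ω) ω)
    (Integrable.finset_sup' hK fun k _ => hsq k)
    (ae_of_all _ (sum_indicator_lindebergSummand_le_sup' hK))

theorem measureReal_abs_sum_condExp_lindebergSummand_ge_le {μ : Measure Ω} [IsFiniteMeasure μ]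
    (hmono : Monotone 𝓕) (hle : ∀ k, 𝓕 k ≤ m0) (hadapted : ∀ k, StronglyMeasurable[𝓕 k] (X k))
    (hsq : ∀ k, Integrable (fun ω => ‖X k ω‖ ^ 2) μ) {K : ℕ} (hK : (Finset.Icc 1 K).Nonempty)
    (hε : 0 < ε) {δ : ℝ} (hδ : 0 < δ) :
    μ.real {ω | δ ≤ |∑ k ∈ Finset.Icc 1 K, μ[lindebergSummand ε (X k) | 𝓕 (k - 1)] ω|}
      ≤ (δ⁻¹ + (ε ^ 2)⁻¹) * ∫ ω, (Finset.Icc 1 K).sup' hK (fun k => ‖X k ω‖ ^ 2) ∂μ := by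
  set S := fun ω => ∑ k ∈ Finset.Icc 1 K, μ[lindebergSummand ε (X k) | 𝓕 (k - 1)] ω
  set T := fun ω => ∑ k ∈ Finset.Icc 1 K,
    (noExceedanceBefore X ε k).indicator (μ[lindebergSummand ε (X k) | 𝓕 (k - 1)]) ω
  set M := fun ω => (Finset.Icc 1 K).sup' hK fun k => ‖X k ω‖ ^ 2
  have hM_nonneg ω : 0 ≤ M ω :=
    (sq_nonneg _).trans (Finset.le_sup' (fun k => ‖X k ω‖ ^ 2) hK.choose_spec)
  have hT_nonneg : 0 ≤ᵐ[μ] T := by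
    have hCE : ∀ᵐ ω ∂μ, ∀ k, 0 ≤ μ[lindebergSummand ε (X k) | 𝓕 (k - 1)] ω :=
      ae_all_iff.mpr fun k => condExp_nonneg (ae_of_all _ fun ω =>
        Set.indicator_nonneg (fun _ _ => sq_nonneg _) ω)
    filter_upwards [hCE] with ω hω
    exact Finset.sum_nonneg fun k _ => Set.indicator_nonneg (fun ω _ => hω k) ω
  have hT_markov : δ * μ.real {ω | δ ≤ |T ω|} ≤ ∫ ω, M ω ∂μ := calc
    _ ≤ ∫ ω, |T ω| ∂μ := mul_meas_ge_le_integral_of_nonneg (ae_of_all _ fun ω => abs_nonneg _)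
        (integrable_finsetSum _ fun k _ => integrable_condExp.indicator
          (hle _ _ (measurableSet_noExceedanceBefore hmono hadapted k))).abs δ
    _ = ∫ ω, T ω ∂μ := integral_congr_ae (hT_nonneg.mono fun ω h => abs_of_nonneg h)
    _ ≤ _ := integral_sum_indicator_condExp_lindebergSummand_le hmono hle hadapted hsq hK
  have hM_markov : ε ^ 2 * μ.real {ω | ε ^ 2 ≤ M ω} ≤ ∫ ω, M ω ∂μ :=
    mul_meas_ge_le_integral_of_nonneg (ae_of_all _ hM_nonneg)
      (Integrable.finset_sup' hK fun k _ => hsq k) _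
  have hcover : {ω | δ ≤ |S ω|} ⊆ {ω | δ ≤ |T ω|} ∪ {ω | ε ^ 2 ≤ M ω} := by
    intro ω hω
    refine (le_or_gt (ε ^ 2) (M ω)).symm.imp_left fun hMω => ?_
    have hTS : T ω = S ω := Finset.sum_congr rfl fun k hk => Set.indicator_of_mem
      (mem_noExceedanceBefore_of_sup'_lt hε.le hK hMω (Finset.mem_Icc.mp hk).2) _
    rwa [Set.mem_ofPred_eq, hTS]
  calc μ.real {ω | δ ≤ |S ω|} ≤ μ.real {ω | δ ≤ |T ω|} + μ.real {ω | ε ^ 2 ≤ M ω} :=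
        (measureReal_mono hcover).trans (measureReal_union_le _ _)
    _ ≤ δ⁻¹ * ∫ ω, M ω ∂μ + (ε ^ 2)⁻¹ * ∫ ω, M ω ∂μ := by
        gcongr
        · exact (le_inv_mul_iff₀ hδ).mpr hT_markov
        · exact (le_inv_mul_iff₀ (by positivity)).mpr hM_markov
    _ = _ := by ring

end TriangularRow

/-- For a square-integrable adapted triangular array, the condition
(M₂^d): `E(max_{1≤k≤k_n} ‖X_{nk}‖²) → 0` implies the conditional Lindeberg condition
(CLB^d): for every `ε > 0`,
`∑_{k=1}^{k_n} E(‖X_{nk}‖² 1_{‖X_{nk}‖ ≥ ε} | F_{n,k-1}) → 0` in probability. -/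
theorem stmt2 {Ω : Type*} {m0 : MeasurableSpace Ω} (μ : Measure Ω) [IsProbabilityMeasure μ]
    {d : ℕ} (kn : ℕ → ℕ) (hkn : ∀ n, 1 ≤ kn n)
    (𝓕 : ℕ → ℕ → MeasurableSpace Ω)
    (hFmono : ∀ n, Monotone (𝓕 n)) (hFle : ∀ n k, 𝓕 n k ≤ m0)
    (X : ℕ → ℕ → Ω → EuclideanSpace ℝ (Fin d))
    (hadapted : ∀ n k, StronglyMeasurable[𝓕 n k] (X n k))
    (hL2 : ∀ n k, MemLp (X n k) 2 μ)
    (hM2 : Tendsto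
      (fun n => ∫ ω, (Finset.Icc 1 (kn n)).sup'
        (Finset.nonempty_Icc.mpr (hkn n)) (fun k => ‖X n k ω‖ ^ 2) ∂μ)
      atTop (nhds 0)) :
    ∀ ε > (0 : ℝ), TendstoInMeasure μ
      (fun n ω => ∑ k ∈ Finset.Icc 1 (kn n),
        (μ[Set.indicator {ω'' | ε ≤ ‖X n k ω''‖} (fun ω'' => ‖X n k ω''‖ ^ 2) | 𝓕 n (k - 1)]) ω)
      atTop (fun _ => 0) := by
  intro ε hε
  rw [tendstoInMeasure_iff_measureReal_dist]
  intro δ hδ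
  simp only [Real.dist_eq, sub_zero]
  have hbound := hM2.const_mul (δ⁻¹ + (ε ^ 2)⁻¹)
  rw [mul_zero] at hbound
  refine tendsto_of_tendsto_of_tendsto_of_le_of_le tendsto_const_nhds hbound
    (fun n => measureReal_nonneg) fun n => ?_
  exact measureReal_abs_sum_condExp_lindebergSummand_ge_le (hFmono n) (hFle n) (hadapted n)
    (fun k => (hL2 n k).integrable_norm_pow two_ne_zero) _ hε hδ
end

section
/- For a triangular array of integrable ℝ^d-valued adapted random vectors, condition (M₁^d): E(max_{1≤k≤k_n} ‖X_{nk}‖) → 0 implies the conditional L₁-Lindeberg condition (CLB₁^d): for every ε > 0, ∑_{k=1}^{k_n} E(‖X_{nk}‖ 1_{{‖X_{nk}‖ ≥ ε}} | F_{n,k-1}) → 0 in probability as n → ∞. -/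
/-!
Write `Yₖ = ‖Xₙₖ‖ 1{‖Xₙₖ‖ ≥ ε}` and `Mₙ = maxₖ ‖Xₙₖ‖`. On `{Mₙ < ε}` every `Yₖ` vanishes, so there
the sum of the `E(Yₖ | Fₙ,ₖ₋₁)` agrees with the sum stopped at the `Fₙ,ₖ₋₁`-measurable events
`{Y₁ + ⋯ + Yₖ₋₁ = 0}`. The stopped sum of the `Yₖ` keeps at most one term, so it is at most `Mₙ`,
and the stopped compensator sum has the same expectation. Markov's inequality for it and for `Mₙ`
bounds the probability that the compensator sum exceeds `δ` by `(1/ε + 1/δ) E Mₙ`.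
-/

open MeasureTheory Filter Finset

lemma sum_ite_partialSum_nonpos_le_min {Y : ℕ → ℝ} {b : ℝ} (hY : ∀ k, 0 ≤ Y k) (hb : 0 ≤ b)
    (n : ℕ) (hYb : ∀ k ∈ Icc 1 n, Y k ≤ b) :
    ∑ k ∈ Icc 1 n, (if ∑ j ∈ Icc 1 (k - 1), Y j ≤ 0 then Y k else 0)
      ≤ min (∑ k ∈ Icc 1 n, Y k) b := by
  induction n with
  | zero => simp [hb]
  | succ n ih =>
    have ih := ih fun k hk => hYb k (Icc_subset_Icc_right n.le_succ hk)
    have hYn : Y (n + 1) ≤ b := hYb (n + 1) (mem_Icc.mpr ⟨by omega, le_rfl⟩)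
    rw [sum_Icc_succ_top (by omega), sum_Icc_succ_top (by omega), Nat.add_sub_cancel]
    split_ifs with h
    · have hprev : ∑ k ∈ Icc 1 n, (if ∑ j ∈ Icc 1 (k - 1), Y j ≤ 0 then Y k else 0) ≤ 0 :=
        ih.trans ((min_le_left _ _).trans h)
      have hsum : 0 ≤ ∑ k ∈ Icc 1 n, Y k := sum_nonneg fun k _ => hY k
      exact le_min (by linarith) (by linarith)
    · rw [add_zero]
      exact ih.trans (min_le_min_right _ (le_add_of_nonneg_right (hY _)))

section

variable {Ω ι : Type*} {m0 : MeasurableSpace Ω} {μ : Measure Ω}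

lemma integrable_finset_sup'_apply {s : Finset ι} (hs : s.Nonempty) {f : ι → Ω → ℝ}
    (hf : ∀ i ∈ s, Integrable (f i) μ) :
    Integrable (fun ω => s.sup' hs fun i => f i ω) μ := by
  simpa only [← Finset.sup'_apply] using
    Finset.sup'_induction hs f (p := (Integrable · μ)) (fun _ hf _ hg => hf.sup hg) hf

lemma measureReal_ge_le_integral_div {f : Ω → ℝ} (hf_nonneg : 0 ≤ᵐ[μ] f)
    (hf : Integrable f μ) {ε : ℝ} (hε : 0 < ε) :
    μ.real {ω | ε ≤ f ω} ≤ (∫ ω, f ω ∂μ) / ε := by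
  rw [le_div_iff₀' hε]
  exact mul_meas_ge_le_integral_of_nonneg hf_nonneg hf ε

lemma integral_sum_indicator_condExp {E : Type*} [NormedAddCommGroup E] [NormedSpace ℝ E]
    [CompleteSpace E] [IsFiniteMeasure μ] {m : ι → MeasurableSpace Ω}
    (hm : ∀ i, m i ≤ m0) {Y : ι → Ω → E} (hY : ∀ i, Integrable (Y i) μ) {B : ι → Set Ω}
    (hB : ∀ i, MeasurableSet[m i] (B i)) (s : Finset ι) :
    ∫ ω, ∑ i ∈ s, (B i).indicator (μ[Y i | m i]) ω ∂μ
      = ∫ ω, ∑ i ∈ s, (B i).indicator (Y i) ω ∂μ := by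
  have hB' : ∀ i, MeasurableSet (B i) := fun i => hm i _ (hB i)
  rw [integral_finsetSum _ fun i _ => integrable_condExp.indicator (hB' i),
    integral_finsetSum _ fun i _ => (hY i).indicator (hB' i)]
  refine sum_congr rfl fun i _ => ?_
  rw [integral_indicator (hB' i), integral_indicator (hB' i)]
  exact setIntegral_condExp (hm i) (hY i) (hB i)

end

section

variable {Ω : Type*} {m0 : MeasurableSpace Ω} {μ : Measure Ω} [IsFiniteMeasure μ]
  {F : Filtration ℕ m0}

lemma measureReal_le_norm_sum_condExp_le {Y : ℕ → Ω → ℝ} (hY : Adapted F Y)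
    (hY_int : ∀ k, Integrable (Y k) μ) (hY_nonneg : ∀ k, 0 ≤ Y k) {M : Ω → ℝ}
    (hM : Integrable M μ) (hM_nonneg : 0 ≤ M) {n : ℕ} (hYM : ∀ k ∈ Icc 1 n, Y k ≤ M)
    {δ : ℝ} (hδ : 0 < δ) :
    μ.real {ω | δ ≤ ‖∑ k ∈ Icc 1 n, μ[Y k | F (k - 1)] ω‖}
      ≤ μ.real {ω | 0 < ∑ k ∈ Icc 1 n, Y k ω} + (∫ ω, M ω ∂μ) / δ := by
  set B : ℕ → Set Ω := fun k => {ω | ∑ j ∈ Icc 1 (k - 1), Y j ω ≤ 0}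
  have hB : ∀ k, MeasurableSet[F (k - 1)] (B k) := fun k =>
    measurableSet_le (Finset.measurable_sum _ fun j hj =>
      hY.measurable_le (mem_Icc.mp hj).2) measurable_const
  set T : Ω → ℝ := fun ω => ∑ k ∈ Icc 1 n, (B k).indicator (μ[Y k | F (k - 1)]) ω
  have hT_int : Integrable T μ :=
    integrable_finsetSum _ fun k _ => integrable_condExp.indicator (F.le _ _ (hB k))
  have hT_nonneg : 0 ≤ᵐ[μ] T := by
    filter_upwards [ae_all_iff.mpr fun k => condExp_nonneg (m := F (k - 1))
      (ae_of_all μ (hY_nonneg k))] with ω hω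
    exact sum_nonneg fun k _ => Set.indicator_nonneg (fun _ _ => hω k) ω
  have hT_integral : ∫ ω, T ω ∂μ ≤ ∫ ω, M ω ∂μ := by
    rw [integral_sum_indicator_condExp (fun k => F.le (k - 1)) hY_int hB]
    refine integral_mono (integrable_finsetSum _ fun k _ =>
      (hY_int k).indicator (F.le _ _ (hB k))) hM fun ω => ?_
    simpa only [B, Set.indicator_apply, Set.mem_ofPred_eq] using
      (sum_ite_partialSum_nonpos_le_min (fun k => hY_nonneg k ω) (hM_nonneg ω) n
        fun k hk => hYM k hk ω).trans (min_le_right _ _)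
  have hsub : {ω | δ ≤ ‖∑ k ∈ Icc 1 n, μ[Y k | F (k - 1)] ω‖}
      ⊆ {ω | 0 < ∑ k ∈ Icc 1 n, Y k ω} ∪ {ω | δ ≤ ‖T ω‖} := by
    intro ω hω
    by_cases hpos : 0 < ∑ k ∈ Icc 1 n, Y k ω
    · exact Or.inl hpos
    · have hmem : ∀ k ∈ Icc 1 n, ω ∈ B k := fun k hk =>
        (sum_le_sum_of_subset_of_nonneg (Icc_subset_Icc_right ((Nat.sub_le k 1).trans
          (mem_Icc.mp hk).2)) fun j _ _ => hY_nonneg j ω).trans (not_lt.mp hpos)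
      have hTω : T ω = ∑ k ∈ Icc 1 n, μ[Y k | F (k - 1)] ω :=
        sum_congr rfl fun k hk => Set.indicator_of_mem (hmem k hk) _
      exact Or.inr (show δ ≤ ‖T ω‖ by rwa [hTω])
  have hT_markov : μ.real {ω | δ ≤ ‖T ω‖} ≤ (∫ ω, M ω ∂μ) / δ := by
    refine (measureReal_ge_le_integral_div (ae_of_all μ fun ω => norm_nonneg _) hT_int.norm
      hδ).trans ?_
    rw [integral_congr_ae (hT_nonneg.mono fun ω hω => Real.norm_of_nonneg hω)]
    gcongr
  calc μ.real {ω | δ ≤ ‖∑ k ∈ Icc 1 n, μ[Y k | F (k - 1)] ω‖}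
      ≤ μ.real {ω | 0 < ∑ k ∈ Icc 1 n, Y k ω} + μ.real {ω | δ ≤ ‖T ω‖} :=
        (measureReal_mono hsub).trans (measureReal_union_le _ _)
    _ ≤ μ.real {ω | 0 < ∑ k ∈ Icc 1 n, Y k ω} + (∫ ω, M ω ∂μ) / δ := by gcongr

lemma measureReal_le_norm_sum_condExp_indicator_norm_le {E : Type*} [NormedAddCommGroup E]
    {X : ℕ → Ω → E} (hX : StronglyAdapted F X) (hX_int : ∀ k, Integrable (X k) μ) {n : ℕ}
    (hn : (Icc 1 n).Nonempty) {ε δ : ℝ} (hε : 0 < ε) (hδ : 0 < δ) :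
    μ.real {ω | δ ≤ ‖∑ k ∈ Icc 1 n,
        μ[{ω | ε ≤ ‖X k ω‖}.indicator (fun ω => ‖X k ω‖) | F (k - 1)] ω‖}
      ≤ (∫ ω, (Icc 1 n).sup' hn (fun k => ‖X k ω‖) ∂μ) / ε
        + (∫ ω, (Icc 1 n).sup' hn (fun k => ‖X k ω‖) ∂μ) / δ := by
  set M : Ω → ℝ := fun ω => (Icc 1 n).sup' hn fun k => ‖X k ω‖
  set Y : ℕ → Ω → ℝ := fun k => {ω | ε ≤ ‖X k ω‖}.indicator fun ω => ‖X k ω‖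
  have hXM : ∀ k ∈ Icc 1 n, ∀ ω, ‖X k ω‖ ≤ M ω := fun k hk ω =>
    le_sup' (fun k => ‖X k ω‖) hk
  have hM_nonneg : 0 ≤ M := fun ω =>
    (norm_nonneg _).trans (hXM _ hn.choose_spec ω)
  have hM_int : Integrable M μ := integrable_finset_sup'_apply hn fun k _ => (hX_int k).norm
  have hS : ∀ k, MeasurableSet[F k] {ω | ε ≤ ‖X k ω‖} := fun k =>
    (hX k).norm.measurable measurableSet_Ici
  have hY_pos : {ω | 0 < ∑ k ∈ Icc 1 n, Y k ω} ⊆ {ω | ε ≤ M ω} := by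
    intro ω (hω : 0 < ∑ k ∈ Icc 1 n, Y k ω)
    by_contra hlt
    replace hlt : M ω < ε := not_le.mp hlt
    refine hω.ne' (sum_eq_zero fun k hk => Set.indicator_of_notMem ?_ _)
    exact not_le.mpr ((hXM k hk ω).trans_lt hlt)
  calc _ ≤ μ.real {ω | 0 < ∑ k ∈ Icc 1 n, Y k ω} + (∫ ω, M ω ∂μ) / δ :=
        measureReal_le_norm_sum_condExp_le (fun k => (hX k).norm.measurable.indicator (hS k))
          (fun k => (hX_int k).norm.indicator (F.le k _ (hS k)))
          (fun k => Set.indicator_nonneg fun _ _ => norm_nonneg _) hM_int hM_nonneg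
          (fun k hk ω => (Set.indicator_le_self' (fun _ _ => norm_nonneg _) ω).trans
            (hXM k hk ω)) hδ
    _ ≤ (∫ ω, M ω ∂μ) / ε + (∫ ω, M ω ∂μ) / δ := by
      gcongr
      exact (measureReal_mono hY_pos).trans
        (measureReal_ge_le_integral_div (ae_of_all μ hM_nonneg) hM_int hε)

end

/-- For a integrable adapted triangular array, the condition
(M₁^d): `E(max_{1≤k≤k_n} ‖X_{nk}‖) → 0` implies the conditional L₁-Lindeberg condition
(CLB₁^d): for every `ε > 0`,
`∑_{k=1}^{k_n} E(‖X_{nk}‖ 1_{‖X_{nk}‖ ≥ ε} | F_{n,k-1}) → 0` in probability. -/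
theorem stmt3 {Ω : Type*} {m0 : MeasurableSpace Ω} (μ : Measure Ω) [IsProbabilityMeasure μ]
    {d : ℕ} (kn : ℕ → ℕ) (hkn : ∀ n, 1 ≤ kn n)
    (𝓕 : ℕ → ℕ → MeasurableSpace Ω)
    (hFmono : ∀ n, Monotone (𝓕 n)) (hFle : ∀ n k, 𝓕 n k ≤ m0)
    (X : ℕ → ℕ → Ω → EuclideanSpace ℝ (Fin d))
    (hadapted : ∀ n k, StronglyMeasurable[𝓕 n k] (X n k))
    (hL2 : ∀ n k, Integrable (X n k) μ)
    (hM2 : Tendsto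
      (fun n => ∫ ω, (Finset.Icc 1 (kn n)).sup'
        (Finset.nonempty_Icc.mpr (hkn n)) (fun k => ‖X n k ω‖) ∂μ)
      atTop (nhds 0)) :
    ∀ ε > (0 : ℝ), TendstoInMeasure μ
      (fun n ω => ∑ k ∈ Finset.Icc 1 (kn n),
        (μ[Set.indicator {ω'' | ε ≤ ‖X n k ω''‖} (fun ω'' => ‖X n k ω''‖) | 𝓕 n (k - 1)]) ω)
      atTop (fun _ => 0) := by
  intro ε hε
  rw [tendstoInMeasure_iff_measureReal_norm]
  intro δ hδ
  have hlim := (hM2.div_const ε).add (hM2.div_const δ)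
  rw [zero_div, zero_div, add_zero] at hlim
  refine squeeze_zero (fun n => measureReal_nonneg) (fun n => ?_) hlim
  simpa only [sub_zero] using measureReal_le_norm_sum_condExp_indicator_norm_le
    (F := ⟨𝓕 n, hFmono n, hFle n⟩) (hadapted n) (hL2 n) (nonempty_Icc.mpr (hkn n)) hε hδ
end

section
/- Let (X_{nk})_{1≤k≤k_n, n∈ℕ} be a 2-dimensional square-integrable adapted array with components X_{nk} = (U_{nk}, V_{nk}). Suppose (i) ∑_{k=1}^{k_n} E(‖X_{nk}‖² 1_{{‖X_{nk}‖ ≥ ε}}) → 0 for all ε > 0, and (ii) ∑_{k=1}^{k_n} E(‖X_{nk}‖²) ≤ C for some constant C < ∞ and all n. Then ∑_{k=1}^{k_n} E(U_{nk}V_{nk} | F_{n,k-1}) − ∑_{k=1}^{k_n} U_{nk}V_{nk} → 0 in L¹ as n → ∞. -/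
/-!
Truncate `Y_k = U_k V_k` at the event `‖X_k‖ < ε`. The prediction errors
`E(Y_k | F_{k-1}) - Y_k` of the large parts are controlled in `L¹` by the Lindeberg sums. Those
of the small parts are martingale differences bounded by `ε²`, hence orthogonal in `L²`, so the
second moment of their sum is at most `ε² ∑_k E‖X_k‖² ≤ ε² C`, and its `L¹` norm at most `ε √C`.
-/

open MeasureTheory Filter

lemma abs_coord_mul_le_norm_sq_div_two (x : EuclideanSpace ℝ (Fin 2)) :
    |x 0 * x 1| ≤ ‖x‖ ^ 2 / 2 := by
  have h : ‖x‖ ^ 2 = x 0 ^ 2 + x 1 ^ 2 := by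
    simp [EuclideanSpace.norm_sq_eq, Fin.sum_univ_two]
  rw [h, abs_le]
  constructor <;> nlinarith [sq_nonneg (x 0 - x 1), sq_nonneg (x 0 + x 1)]

section

variable {Ω : Type*} {m m0 : MeasurableSpace Ω} {μ : Measure Ω}

open ProbabilityTheory in
lemma sq_integral_abs_le_integral_sq [IsProbabilityMeasure μ] {f : Ω → ℝ} (hf : MemLp f 2 μ) :
    (∫ ω, |f ω| ∂μ) ^ 2 ≤ ∫ ω, f ω ^ 2 ∂μ := by
  have h := variance_nonneg |f| μ
  rw [variance_eq_sub hf.abs] at h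
  simpa [sq_abs] using h

lemma integral_abs_sum_le_sum_integral_abs {ι : Type*} (s : Finset ι) {f : ι → Ω → ℝ}
    (hf : ∀ i ∈ s, Integrable (f i) μ) :
    ∫ ω, |∑ i ∈ s, f i ω| ∂μ ≤ ∑ i ∈ s, ∫ ω, |f i ω| ∂μ := by
  rw [← integral_finsetSum _ fun i hi => (hf i hi).abs]
  exact integral_mono (integrable_finsetSum s hf).abs
    (integrable_finsetSum _ fun i hi => (hf i hi).abs) fun ω => Finset.abs_sum_le_sum_abs _ _

lemma integral_abs_condExp_sub_le {f : Ω → ℝ} (hf : Integrable f μ) :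
    ∫ ω, |μ[f | m] ω - f ω| ∂μ ≤ 2 * ∫ ω, |f ω| ∂μ :=
  calc ∫ ω, |μ[f | m] ω - f ω| ∂μ ≤ ∫ ω, (|μ[f | m] ω| + |f ω|) ∂μ :=
        integral_mono (integrable_condExp.sub hf).abs (integrable_condExp.abs.add hf.abs)
          fun ω => abs_sub _ _
    _ = ∫ ω, |μ[f | m] ω| ∂μ + ∫ ω, |f ω| ∂μ := integral_add integrable_condExp.abs hf.abs
    _ ≤ 2 * ∫ ω, |f ω| ∂μ := by linarith [integral_abs_condExp_le (m := m) (μ := μ) f]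

lemma integral_condExp_sub_sq_le {f : Ω → ℝ} {R : NNReal} (hf : Integrable f μ)
    (hR : ∀ᵐ ω ∂μ, |f ω| ≤ R) :
    ∫ ω, (μ[f | m] ω - f ω) ^ 2 ∂μ ≤ 4 * R * ∫ ω, |f ω| ∂μ := by
  have hbound : ∀ᵐ ω ∂μ, (μ[f | m] ω - f ω) ^ 2 ≤ 2 * R * |μ[f | m] ω - f ω| := by
    filter_upwards [hR, ae_bdd_abs_condExp_of_ae_bdd_abs (m := m) hR] with ω hf hc
    rw [sq, ← abs_mul_abs_self]
    gcongr
    linarith [abs_sub (μ[f | m] ω) (f ω)]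
  calc ∫ ω, (μ[f | m] ω - f ω) ^ 2 ∂μ ≤ ∫ ω, 2 * R * |μ[f | m] ω - f ω| ∂μ :=
        integral_mono_of_nonneg (.of_forall fun _ => sq_nonneg _)
          ((integrable_condExp.sub hf).abs.const_mul _) hbound
    _ ≤ 2 * R * (2 * ∫ ω, |f ω| ∂μ) := by
        rw [integral_const_mul]
        gcongr
        exact integral_abs_condExp_sub_le hf
    _ = 4 * R * ∫ ω, |f ω| ∂μ := by ring

noncomputable def predictionError (μ : Measure Ω) (ℱ : Filtration ℕ m0) (g : ℕ → Ω → ℝ) (k : ℕ) :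
    Ω → ℝ :=
  μ[g k | ℱ (k - 1)] - g k

section Filtration

variable {ℱ : Filtration ℕ m0} {g : ℕ → Ω → ℝ}

lemma memLp_predictionError (hg : ∀ k, MemLp (g k) 2 μ) (k : ℕ) :
    MemLp (predictionError μ ℱ g k) 2 μ :=
  ((hg k).condExp one_le_two).sub (hg k)

lemma condExp_predictionError_ae_eq_zero [IsFiniteMeasure μ] (hg : ∀ k, Integrable (g k) μ)
    (k : ℕ) :
    μ[predictionError μ ℱ g k | ℱ (k - 1)] =ᵐ[μ] 0 := by
  unfold predictionError
  filter_upwards [condExp_sub (m := ℱ (k - 1)) integrable_condExp (hg k)] with ω h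
  rw [h, condExp_of_stronglyMeasurable (ℱ.le _) stronglyMeasurable_condExp integrable_condExp]
  simp

lemma integral_predictionError_mul_eq_zero [IsFiniteMeasure μ] (hg : StronglyAdapted ℱ g)
    (hL2 : ∀ k, MemLp (g k) 2 μ) {j k : ℕ} (hjk : j < k) :
    ∫ ω, predictionError μ ℱ g j ω * predictionError μ ℱ g k ω ∂μ = 0 := by
  set D := predictionError μ ℱ g
  have hDj : StronglyMeasurable[ℱ (k - 1)] (D j) :=
    (stronglyMeasurable_condExp.mono (ℱ.mono (by omega))).sub ((hg j).mono (ℱ.mono (by omega)))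
  have hDk : μ[D k | ℱ (k - 1)] =ᵐ[μ] 0 :=
    condExp_predictionError_ae_eq_zero (fun k => (hL2 k).integrable one_le_two) k
  calc ∫ ω, D j ω * D k ω ∂μ = ∫ ω, μ[D j * D k | ℱ (k - 1)] ω ∂μ :=
        (integral_condExp (ℱ.le _)).symm
    _ = ∫ ω, (D j * μ[D k | ℱ (k - 1)]) ω ∂μ :=
        integral_congr_ae (condExp_mul_of_stronglyMeasurable_left hDj
          ((memLp_predictionError hL2 j).integrable_mul (memLp_predictionError hL2 k))
          ((memLp_predictionError hL2 k).integrable one_le_two))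
    _ = 0 := by
        rw [integral_congr_ae (hDk.mono fun ω h => by simp [h] : _ =ᵐ[μ] 0)]
        simp

lemma integral_sq_sum_predictionError [IsFiniteMeasure μ] (hg : StronglyAdapted ℱ g)
    (hL2 : ∀ k, MemLp (g k) 2 μ) (s : Finset ℕ) :
    ∫ ω, (∑ k ∈ s, predictionError μ ℱ g k ω) ^ 2 ∂μ
      = ∑ k ∈ s, ∫ ω, predictionError μ ℱ g k ω ^ 2 ∂μ := by
  set D := predictionError μ ℱ g
  have hint : ∀ j k, Integrable (fun ω => D j ω * D k ω) μ := fun j k =>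
    (memLp_predictionError hL2 j).integrable_mul (memLp_predictionError hL2 k)
  simp_rw [sq, Finset.sum_mul_sum]
  rw [integral_finsetSum _ fun j _ => integrable_finsetSum _ fun k _ => hint j k]
  refine Finset.sum_congr rfl fun j hj => ?_
  rw [integral_finsetSum _ fun k _ => hint j k]
  refine Finset.sum_eq_single_of_mem j hj fun k _ hkj => ?_
  rcases hkj.lt_or_gt with hkj | hjk
  · simpa only [mul_comm] using integral_predictionError_mul_eq_zero hg hL2 hkj
  · exact integral_predictionError_mul_eq_zero hg hL2 hjk

lemma integrable_predictionError {k : ℕ} (hg : Integrable (g k) μ) :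
    Integrable (predictionError μ ℱ g k) μ :=
  integrable_condExp.sub hg

lemma integral_abs_sum_predictionError_le (hg : ∀ k, Integrable (g k) μ) (s : Finset ℕ) :
    ∫ ω, |∑ k ∈ s, predictionError μ ℱ g k ω| ∂μ ≤ 2 * ∑ k ∈ s, ∫ ω, |g k ω| ∂μ := by
  rw [Finset.mul_sum]
  exact (integral_abs_sum_le_sum_integral_abs s fun k _ => integrable_predictionError (hg k)).trans
    (Finset.sum_le_sum fun k _ => integral_abs_condExp_sub_le (hg k))

lemma sq_integral_abs_sum_predictionError_le [IsProbabilityMeasure μ] (hg : StronglyAdapted ℱ g)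
    {R : NNReal} (hR : ∀ k, ∀ᵐ ω ∂μ, |g k ω| ≤ R) (s : Finset ℕ) :
    (∫ ω, |∑ k ∈ s, predictionError μ ℱ g k ω| ∂μ) ^ 2 ≤ 4 * R * ∑ k ∈ s, ∫ ω, |g k ω| ∂μ := by
  have hL2 : ∀ k, MemLp (g k) 2 μ := fun k =>
    MemLp.of_bound ((hg k).mono (ℱ.le k)).aestronglyMeasurable R (by simpa using hR k)
  calc (∫ ω, |∑ k ∈ s, predictionError μ ℱ g k ω| ∂μ) ^ 2
      ≤ ∫ ω, (∑ k ∈ s, predictionError μ ℱ g k ω) ^ 2 ∂μ :=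
        sq_integral_abs_le_integral_sq (memLp_finsetSum s fun k _ => memLp_predictionError hL2 k)
    _ = ∑ k ∈ s, ∫ ω, predictionError μ ℱ g k ω ^ 2 ∂μ := integral_sq_sum_predictionError hg hL2 s
    _ ≤ 4 * R * ∑ k ∈ s, ∫ ω, |g k ω| ∂μ := by
        rw [Finset.mul_sum]
        exact Finset.sum_le_sum fun k _ =>
          integral_condExp_sub_sq_le ((hL2 k).integrable one_le_two) (hR k)

lemma predictionError_add_ae_eq {f : ℕ → Ω → ℝ} {k : ℕ} (hf : Integrable (f k) μ)
    (hg : Integrable (g k) μ) :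
    predictionError μ ℱ (f + g) k =ᵐ[μ] predictionError μ ℱ f k + predictionError μ ℱ g k := by
  filter_upwards [condExp_add (m := ℱ (k - 1)) hf hg] with ω h
  simp only [predictionError, Pi.add_apply, Pi.sub_apply, h]
  ring

lemma integral_abs_sum_predictionError_add_le {f : ℕ → Ω → ℝ} (hf : ∀ k, Integrable (f k) μ)
    (hg : ∀ k, Integrable (g k) μ) (s : Finset ℕ) :
    ∫ ω, |∑ k ∈ s, predictionError μ ℱ (f + g) k ω| ∂μ
      ≤ ∫ ω, |∑ k ∈ s, predictionError μ ℱ f k ω| ∂μ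
        + ∫ ω, |∑ k ∈ s, predictionError μ ℱ g k ω| ∂μ := by
  have hsum : ∀ᵐ ω ∂μ, ∑ k ∈ s, predictionError μ ℱ (f + g) k ω
      = ∑ k ∈ s, predictionError μ ℱ f k ω + ∑ k ∈ s, predictionError μ ℱ g k ω := by
    filter_upwards [(eventually_all_finset s).2 fun k _ => predictionError_add_ae_eq (ℱ := ℱ)
      (hf k) (hg k)] with ω h
    rw [← Finset.sum_add_distrib]
    exact Finset.sum_congr rfl h
  have hfs := integrable_finsetSum s fun k _ => integrable_predictionError (ℱ := ℱ) (hf k)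
  have hgs := integrable_finsetSum s fun k _ => integrable_predictionError (ℱ := ℱ) (hg k)
  rw [integral_congr_ae (hsum.mono fun ω h => congrArg abs h), ← integral_add hfs.abs hgs.abs]
  exact integral_mono (hfs.add hgs).abs (hfs.abs.add hgs.abs) fun ω => abs_add_le _ _

end Filtration

section CoordMul

variable {ℱ : Filtration ℕ m0} {X : ℕ → Ω → EuclideanSpace ℝ (Fin 2)}

lemma stronglyAdapted_coord_mul (hX : StronglyAdapted ℱ X) :
    StronglyAdapted ℱ fun k ω => X k ω 0 * X k ω 1 := by
  have hcoord : ∀ k i, StronglyMeasurable[ℱ k] fun ω => X k ω i := fun k i =>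
    (EuclideanSpace.proj i : EuclideanSpace ℝ (Fin 2) →L[ℝ] ℝ).continuous.comp_stronglyMeasurable
      (hX k)
  exact fun k => (hcoord k 0).mul (hcoord k 1)

lemma integrable_coord_mul {Z : Ω → EuclideanSpace ℝ (Fin 2)} (hZ : MemLp Z 2 μ) :
    Integrable (fun ω => Z ω 0 * Z ω 1) μ := by
  have hcoord : ∀ i, AEStronglyMeasurable (fun ω => Z ω i) μ := fun i =>
    (EuclideanSpace.proj i : EuclideanSpace ℝ (Fin 2) →L[ℝ] ℝ).continuous.comp_aestronglyMeasurable
      hZ.1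
  exact (hZ.norm.integrable_sq.div_const 2).mono' ((hcoord 0).mul (hcoord 1))
    (.of_forall fun ω => abs_coord_mul_le_norm_sq_div_two (Z ω))

lemma integral_abs_sum_predictionError_indicator_coord_mul_le (hL2 : ∀ k, MemLp (X k) 2 μ)
    {A : ℕ → Set Ω} (hA : ∀ k, MeasurableSet (A k)) (s : Finset ℕ) :
    ∫ ω, |∑ k ∈ s, predictionError μ ℱ
        (fun k => (A k).indicator fun ω => X k ω 0 * X k ω 1) k ω| ∂μ
      ≤ ∑ k ∈ s, ∫ ω, (A k).indicator (fun ω => ‖X k ω‖ ^ 2) ω ∂μ := by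
  have hi : ∀ k, Integrable ((A k).indicator fun ω => X k ω 0 * X k ω 1) μ := fun k =>
    (integrable_coord_mul (hL2 k)).indicator (hA k)
  refine (integral_abs_sum_predictionError_le hi s).trans ?_
  rw [Finset.mul_sum]
  refine Finset.sum_le_sum fun k _ => ?_
  rw [← integral_const_mul]
  refine integral_mono ((hi k).abs.const_mul _)
    ((hL2 k).norm.integrable_sq.indicator (hA k)) fun ω => ?_
  by_cases hω : ω ∈ A k
  · simp only [Set.indicator_of_mem hω]
    linarith [abs_coord_mul_le_norm_sq_div_two (X k ω)]
  · simp [hω]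

lemma integral_abs_sum_predictionError_indicator_lt_coord_mul_le [IsProbabilityMeasure μ]
    (hX : StronglyAdapted ℱ X) (hL2 : ∀ k, MemLp (X k) 2 μ) {ε : ℝ} (hε : 0 ≤ ε)
    (s : Finset ℕ) :
    ∫ ω, |∑ k ∈ s, predictionError μ ℱ
        (fun k => {ω | ‖X k ω‖ < ε}.indicator fun ω => X k ω 0 * X k ω 1) k ω| ∂μ
      ≤ ε * √(∑ k ∈ s, ∫ ω, ‖X k ω‖ ^ 2 ∂μ) := by
  set S : ℕ → Ω → ℝ := fun k => {ω | ‖X k ω‖ < ε}.indicator fun ω => X k ω 0 * X k ω 1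
  have hA : ∀ k, MeasurableSet[ℱ k] {ω | ‖X k ω‖ < ε} := fun k =>
    measurableSet_lt (hX k).norm.measurable measurable_const
  have hSε : ∀ k, ∀ᵐ ω ∂μ, |S k ω| ≤ (⟨ε ^ 2 / 2, by positivity⟩ : NNReal) := by
    refine fun k => .of_forall fun ω => ?_
    by_cases hω : ‖X k ω‖ < ε
    · simp only [S, Set.indicator_of_mem (show ω ∈ {ω | ‖X k ω‖ < ε} from hω)]
      nlinarith [abs_coord_mul_le_norm_sq_div_two (X k ω), norm_nonneg (X k ω)]
    · simp [S, hω]; positivity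
  have hSX : ∀ k ω, |S k ω| ≤ ‖X k ω‖ ^ 2 / 2 := by
    intro k ω
    by_cases hω : ‖X k ω‖ < ε
    · simpa only [S, Set.indicator_of_mem (show ω ∈ {ω | ‖X k ω‖ < ε} from hω)]
        using abs_coord_mul_le_norm_sq_div_two (X k ω)
    · simp [S, hω]; positivity
  have hSint : ∑ k ∈ s, ∫ ω, |S k ω| ∂μ ≤ (∑ k ∈ s, ∫ ω, ‖X k ω‖ ^ 2 ∂μ) / 2 := by
    rw [Finset.sum_div]
    gcongr with k
    rw [← integral_div]
    exact integral_mono ((integrable_coord_mul (hL2 k)).indicator (ℱ.le k _ (hA k))).abs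
      ((hL2 k).norm.integrable_sq.div_const 2) (hSX k)
  have hsq := sq_integral_abs_sum_predictionError_le
    (fun k => (stronglyAdapted_coord_mul hX k).indicator (hA k)) hSε s
  change _ ≤ 4 * (ε ^ 2 / 2) * _ at hsq
  rw [← Real.sqrt_sq hε, ← Real.sqrt_mul (sq_nonneg ε)]
  refine Real.le_sqrt_of_sq_le (hsq.trans ?_)
  linarith [mul_le_mul_of_nonneg_left hSint (sq_nonneg ε)]

theorem integral_abs_sum_predictionError_coord_mul_le [IsProbabilityMeasure μ]
    (hX : StronglyAdapted ℱ X) (hL2 : ∀ k, MemLp (X k) 2 μ) {ε : ℝ} (hε : 0 ≤ ε)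
    (s : Finset ℕ) :
    ∫ ω, |∑ k ∈ s, predictionError μ ℱ (fun k ω => X k ω 0 * X k ω 1) k ω| ∂μ
      ≤ ∑ k ∈ s, ∫ ω, {ω | ε ≤ ‖X k ω‖}.indicator (fun ω => ‖X k ω‖ ^ 2) ω ∂μ
        + ε * √(∑ k ∈ s, ∫ ω, ‖X k ω‖ ^ 2 ∂μ) := by
  have hnorm : ∀ k, Measurable fun ω => ‖X k ω‖ := fun k =>
    ((hX k).mono (ℱ.le k)).norm.measurable
  have hge : ∀ k, MeasurableSet {ω | ε ≤ ‖X k ω‖} := fun k =>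
    measurableSet_le measurable_const (hnorm k)
  have hlt : ∀ k, MeasurableSet {ω | ‖X k ω‖ < ε} := fun k =>
    measurableSet_lt (hnorm k) measurable_const
  have hsplit : (fun k ω => X k ω 0 * X k ω 1) =
      (fun k => {ω | ε ≤ ‖X k ω‖}.indicator fun ω => X k ω 0 * X k ω 1)
        + fun k => {ω | ‖X k ω‖ < ε}.indicator fun ω => X k ω 0 * X k ω 1 := by
    ext k ω
    by_cases hω : ε ≤ ‖X k ω‖ <;> simp [hω, not_le.1]
  rw [hsplit]
  refine (integral_abs_sum_predictionError_add_le
    (fun k => (integrable_coord_mul (hL2 k)).indicator (hge k))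
    (fun k => (integrable_coord_mul (hL2 k)).indicator (hlt k)) s).trans ?_
  exact add_le_add (integral_abs_sum_predictionError_indicator_coord_mul_le hL2 hge s)
    (integral_abs_sum_predictionError_indicator_lt_coord_mul_le hX hL2 hε s)

end CoordMul

end

/-- Lemma 1 of the paper: for a 2-dimensional square-integrable adapted array with components
`U_{nk} = X_{nk,1}`, `V_{nk} = X_{nk,2}`, the unconditional Lindeberg-type condition (i) and the
uniform L² bound (ii) imply that
`∑_k E(U_{nk}V_{nk} | F_{n,k-1}) − ∑_k U_{nk}V_{nk} → 0` in `L¹`. -/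
theorem stmt4 {Ω : Type*} {m0 : MeasurableSpace Ω} (μ : Measure Ω) [IsProbabilityMeasure μ]
    (kn : ℕ → ℕ)
    (𝓕 : ℕ → ℕ → MeasurableSpace Ω)
    (hFmono : ∀ n, Monotone (𝓕 n)) (hFle : ∀ n k, 𝓕 n k ≤ m0)
    (X : ℕ → ℕ → Ω → EuclideanSpace ℝ (Fin 2))
    (hadapted : ∀ n k, StronglyMeasurable[𝓕 n k] (X n k))
    (hL2 : ∀ n k, MemLp (X n k) 2 μ)
    (hLind : ∀ ε > (0 : ℝ), Tendsto
      (fun n => ∑ k ∈ Finset.Icc 1 (kn n),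
        ∫ ω, Set.indicator {ω'' | ε ≤ ‖X n k ω''‖} (fun ω'' => ‖X n k ω''‖ ^ 2) ω ∂μ)
      atTop (nhds 0))
    (C : ℝ)
    (hbound : ∀ n, ∑ k ∈ Finset.Icc 1 (kn n), ∫ ω, ‖X n k ω‖ ^ 2 ∂μ ≤ C) :
    Tendsto
      (fun n => ∫ ω,
        |∑ k ∈ Finset.Icc 1 (kn n), (μ[fun ω' => X n k ω' 0 * X n k ω' 1 | 𝓕 n (k - 1)]) ω
          - ∑ k ∈ Finset.Icc 1 (kn n), X n k ω 0 * X n k ω 1| ∂μ)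
      atTop (nhds 0) := by
  rw [NormedAddGroup.tendsto_nhds_zero]
  intro δ hδ
  set ε := δ / (2 * (√C + 1))
  have hε : 0 < ε := by positivity
  have hεC : ε * √C < δ / 2 := by
    rw [div_mul_eq_mul_div, div_lt_div_iff₀ (by positivity) two_pos]
    nlinarith [Real.sqrt_nonneg C]
  filter_upwards [(hLind ε hε).eventually_lt_const (half_pos hδ)] with n hn
  let ℱ : Filtration ℕ m0 := ⟨𝓕 n, hFmono n, hFle n⟩
  have hrow := integral_abs_sum_predictionError_coord_mul_le (ℱ := ℱ) (μ := μ) (hadapted n) (hL2 n)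
    hε.le (Finset.Icc 1 (kn n))
  simp only [predictionError, Pi.sub_apply, Finset.sum_sub_distrib] at hrow
  rw [Real.norm_of_nonneg (integral_nonneg fun _ => abs_nonneg _)]
  calc _ ≤ _ := hrow
    _ < δ / 2 + δ / 2 := by
      gcongr
      exact (mul_le_mul_of_nonneg_left (Real.sqrt_le_sqrt (hbound n)) hε.le).trans_lt hεC
    _ = δ := add_halves δ
end

section
/- Let (X_{nk})_{1≤k≤k_n, n∈ℕ} be a square-integrable adapted d-dimensional array satisfying the conditional Lindeberg condition (CLB^d) and the norming condition (N^d): ∑_{k=1}^{k_n} E(X_{nk}X_{nk}ᵀ | F_{n,k-1}) → A in probability for some random symmetric positive semidefinite matrix A. Then the Raikov condition (R^d) holds: ∑_{k=1}^{k_n} X_{nk}X_{nk}ᵀ → A in probability as n → ∞. -/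
/-!
Write `Y k = X k i * X k j` and `N k = ‖X k‖²`, so that `|Y k| ≤ N k`. Since the sums of
`E[Y k | 𝓕 (k - 1)]` converge to `A i j` by the norming condition, it suffices that the
compensated sums `∑ (Y k - E[Y k | 𝓕 (k - 1)])` tend to `0` in probability. Split `Y k` at the
level `ε` of `N k`.

The part on `{ε ≤ N k}` is dominated by `N k` restricted to that set, whose compensator vanishes
by the conditional Lindeberg condition, hence so does its sum, by Lenglart's inequality.

The part on `{N k < ε}` yields martingale increments whose conditional variance is at most
`ε E[N k | 𝓕 (k - 1)]`. Stopping them once the compensator of `N` reaches `C` bounds the second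
moment of the stopped sum by `ε C`, and the compensator of `N` converges (to the trace of `A`),
so it exceeds `C` only with small probability once `C` is large.
-/

open MeasureTheory Filter ProbabilityTheory

theorem Finset.sum_Icc_ite_sum_lt_le {c : ℕ → ℝ} {C : ℝ} (hC : 0 ≤ C) (K : ℕ)
    (hc : ∀ k ∈ Finset.Icc 1 K, 0 ≤ c k) :
    ∑ k ∈ Finset.Icc 1 K, (if ∑ j ∈ Finset.Icc 1 k, c j < C then c k else 0) ≤ C := by
  induction K with
  | zero => simpa using hC
  | succ K ih =>
    have hK := Nat.le_add_left 1 K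
    rw [Finset.sum_Icc_succ_top hK]
    by_cases h : ∑ j ∈ Finset.Icc 1 (K + 1), c j < C
    · have hle : ∀ k ∈ Finset.Icc 1 K,
          ∑ j ∈ Finset.Icc 1 k, c j ≤ ∑ j ∈ Finset.Icc 1 (K + 1), c j :=
        fun k hk => Finset.sum_le_sum_of_subset_of_nonneg
          (Finset.Icc_subset_Icc le_rfl ((Finset.mem_Icc.1 hk).2.trans K.le_succ))
          fun j hj _ => hc j hj
      rw [Finset.sum_congr rfl fun k hk => if_pos ((hle k hk).trans_lt h), if_pos h,
        ← Finset.sum_Icc_succ_top hK]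
      exact h.le
    · rw [if_neg h, add_zero]
      exact ih fun k hk => hc k (Finset.Icc_subset_Icc le_rfl K.le_succ hk)

theorem sq_indicator_compl_le_mul {Ω : Type*} {Y N : Ω → ℝ} (hYN : ∀ ω, |Y ω| ≤ N ω) {ε : ℝ}
    (hε : 0 ≤ ε) (ω : Ω) : ({ω | ε ≤ N ω}ᶜ.indicator Y ω) ^ 2 ≤ ε * N ω := by
  have hN : 0 ≤ N ω := (abs_nonneg _).trans (hYN ω)
  by_cases h : ε ≤ N ω
  · simpa [h] using mul_nonneg hε hN
  · rw [Set.indicator_of_mem (by exact h), ← sq_abs]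
    nlinarith [hYN ω, abs_nonneg (Y ω), not_le.1 h]

theorem EuclideanSpace.abs_mul_apply_le_norm_sq {κ : Type*} [Fintype κ] (x : EuclideanSpace ℝ κ)
    (a b : κ) : |x a * x b| ≤ ‖x‖ ^ 2 := by
  rw [abs_mul, sq, ← Real.norm_eq_abs, ← Real.norm_eq_abs]
  exact mul_le_mul (PiLp.norm_apply_le x a) (PiLp.norm_apply_le x b) (norm_nonneg _)
    (norm_nonneg _)

namespace MeasureTheory

section ConvergenceInMeasure

variable {Ω ι : Type*} {m0 : MeasurableSpace Ω} {μ : Measure Ω} [IsFiniteMeasure μ]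
  {l : Filter ι}

theorem measureReal_mono_ae {s t : Set Ω} (h : s ≤ᵐ[μ] t) : μ.real s ≤ μ.real t :=
  ENNReal.toReal_mono (measure_ne_top μ t) (measure_mono_ae h)

theorem measureReal_abs_ge_le_of_ae_eq_add {f g h : Ω → ℝ}
    (hfgh : ∀ᵐ ω ∂μ, f ω = g ω + h ω) (δ : ℝ) :
    μ.real {ω | δ ≤ |f ω|} ≤ μ.real {ω | δ / 2 ≤ |g ω|} + μ.real {ω | δ / 2 ≤ |h ω|} := by
  refine (measureReal_mono_ae ?_).trans (measureReal_union_le _ _)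
  filter_upwards [hfgh] with ω hω hδ
  have hδ' : δ ≤ |g ω + h ω| := hω ▸ hδ
  by_contra h'
  have hg : |g ω| < δ / 2 := not_le.1 fun hg => h' (Or.inl hg)
  have hh : |h ω| < δ / 2 := not_le.1 fun hh => h' (Or.inr hh)
  linarith [abs_add_le (g ω) (h ω)]

theorem tendstoInMeasure_zero_iff_measureReal_abs {f : ι → Ω → ℝ} :
    TendstoInMeasure μ f l (fun _ => 0) ↔
      ∀ δ > 0, ∀ ρ > 0, ∀ᶠ i in l, μ.real {ω | δ ≤ |f i ω|} < ρ := by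
  simp only [tendstoInMeasure_iff_measureReal_dist, Real.dist_eq, sub_zero]
  refine forall₂_congr fun δ _ => ⟨fun h ρ hρ => h.eventually_lt_const hρ, fun h => ?_⟩
  exact tendsto_order.2
    ⟨fun a ha => Eventually.of_forall fun i => ha.trans_le measureReal_nonneg, h⟩

theorem TendstoInMeasure.add {E : Type*} [SeminormedAddCommGroup E] {f g : ι → Ω → E}
    {F G : Ω → E} (hf : TendstoInMeasure μ f l F) (hg : TendstoInMeasure μ g l G) :
    TendstoInMeasure μ (fun i ω => f i ω + g i ω) l (fun ω => F ω + G ω) := by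
  rw [tendstoInMeasure_iff_measureReal_dist] at hf hg ⊢
  intro δ hδ
  refine squeeze_zero (fun _ => measureReal_nonneg) (fun i => ?_)
    (by simpa using (hf (δ / 2) (half_pos hδ)).add (hg (δ / 2) (half_pos hδ)))
  refine (measureReal_mono fun ω hω => ?_).trans (measureReal_union_le _ _)
  have hω' : δ ≤ dist (f i ω + g i ω) (F ω + G ω) := hω
  by_contra h
  have h₁ : dist (f i ω) (F ω) < δ / 2 := not_le.1 fun h₁ => h (Or.inl h₁)
  have h₂ : dist (g i ω) (G ω) < δ / 2 := not_le.1 fun h₂ => h (Or.inr h₂)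
  linarith [dist_add_add_le (f i ω) (g i ω) (F ω) (G ω)]

theorem TendstoInMeasure.finsetSum {E κ : Type*} [SeminormedAddCommGroup E] (s : Finset κ)
    {f : κ → ι → Ω → E} {F : κ → Ω → E} (h : ∀ a ∈ s, TendstoInMeasure μ (f a) l (F a)) :
    TendstoInMeasure μ (fun i ω => ∑ a ∈ s, f a i ω) l (fun ω => ∑ a ∈ s, F a ω) := by
  classical
  induction s using Finset.induction with
  | empty =>
    simpa using tendstoInMeasure_iff_dist.2 fun ε hε => by
      simpa [not_le.2 hε] using tendsto_const_nhds (x := (0 : ENNReal))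
  | insert a s ha ih =>
    simp_rw [Finset.sum_insert ha]
    exact (h a (s.mem_insert_self a)).add (ih fun b hb => h b (Finset.mem_insert_of_mem hb))

theorem TendstoInMeasure.of_ae_abs_le {f g : ι → Ω → ℝ}
    (hg : TendstoInMeasure μ g l (fun _ => 0)) (hfg : ∀ i, ∀ᵐ ω ∂μ, |f i ω| ≤ g i ω) :
    TendstoInMeasure μ f l (fun _ => 0) := by
  rw [tendstoInMeasure_zero_iff_measureReal_abs] at hg ⊢
  refine fun δ hδ ρ hρ => (hg δ hδ ρ hρ).mono fun i hi => lt_of_le_of_lt ?_ hi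
  refine measureReal_mono_ae ?_
  filter_upwards [hfg i] with ω hω h
  exact h.trans (hω.trans (le_abs_self _))

theorem AEStronglyMeasurable.exists_measureReal_ge_lt {g : Ω → ℝ}
    (hg : AEStronglyMeasurable g μ) {ρ : ℝ} (hρ : 0 < ρ) :
    ∃ C > 0, μ.real {ω | C ≤ g ω} < ρ := by
  have hempty : ⋂ m : ℕ, {ω | (m : ℝ) ≤ g ω} = ∅ :=
    Set.eq_empty_of_forall_notMem fun ω hω =>
      (exists_nat_gt (g ω)).elim fun m hm => (Set.mem_iInter.1 hω m).not_gt hm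
  have htail := tendsto_measure_iInter_atTop (μ := μ) (s := fun m : ℕ => {ω | (m : ℝ) ≤ g ω})
    (fun _ => aestronglyMeasurable_const.nullMeasurableSet_le hg)
    (fun _ _ h => Set.ofPred_subset_ofPred.2 fun _ => (Nat.cast_le.2 h).trans)
    ⟨0, measure_ne_top μ _⟩
  rw [hempty, measure_empty] at htail
  obtain ⟨m, hm, hm0⟩ := ((((ENNReal.tendsto_toReal ENNReal.zero_ne_top).comp htail)
    |>.eventually_lt_const hρ).and (eventually_gt_atTop 0)).exists
  exact ⟨m, Nat.cast_pos.2 hm0, hm⟩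

theorem TendstoInMeasure.exists_eventually_measureReal_ge_lt [l.NeBot] [l.IsCountablyGenerated]
    {f : ι → Ω → ℝ} {g : Ω → ℝ} (hf : ∀ i, AEStronglyMeasurable (f i) μ)
    (h : TendstoInMeasure μ f l g) {ρ : ℝ} (hρ : 0 < ρ) :
    ∃ C > 0, ∀ᶠ i in l, μ.real {ω | C ≤ f i ω} < ρ := by
  obtain ⟨C, hC0, hC⟩ :=
    AEStronglyMeasurable.exists_measureReal_ge_lt (h.aestronglyMeasurable hf) (half_pos hρ)
  refine ⟨C + 1, by linarith, ((tendstoInMeasure_iff_measureReal_dist.1 h 1 one_pos)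
    |>.eventually_lt_const (half_pos hρ)).mono fun i hi => ?_⟩
  refine ((measureReal_mono fun ω hω => ?_).trans (measureReal_union_le {ω | C ≤ g ω}
    {ω | 1 ≤ dist (f i ω) (g ω)})).trans_lt (by linarith)
  have hω' : C + 1 ≤ f i ω := hω
  by_contra h'
  have h₁ : g ω < C := not_le.1 fun h₁ => h' (Or.inl h₁)
  have h₂ : dist (f i ω) (g ω) < 1 := not_le.1 fun h₂ => h' (Or.inr h₂)
  linarith [le_abs_self (f i ω - g ω), Real.dist_eq (f i ω) (g ω)]

end ConvergenceInMeasure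

section ConditionalExpectation

variable {Ω : Type*} {m0 : MeasurableSpace Ω} {μ : Measure Ω}

theorem measureReal_abs_ge_le_integral_sq_div {f : Ω → ℝ}
    (hf : Integrable (fun ω => f ω ^ 2) μ) {δ : ℝ} (hδ : 0 < δ) :
    μ.real {ω | δ ≤ |f ω|} ≤ (∫ ω, f ω ^ 2 ∂μ) / δ ^ 2 := by
  have hset : {ω | δ ≤ |f ω|} = {ω | δ ^ 2 ≤ f ω ^ 2} := by
    ext ω
    simp only [Set.mem_ofPred_eq, ← sq_abs (f ω)]
    exact (pow_le_pow_iff_left₀ hδ.le (abs_nonneg _) two_ne_zero).symm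
  rw [hset, le_div_iff₀ (by positivity), mul_comm]
  exact mul_meas_ge_le_integral_of_nonneg (ae_of_all μ fun ω => sq_nonneg (f ω)) hf _

theorem integral_mul_eq_zero_of_condExp_eq_zero {m : MeasurableSpace Ω} (hm : m ≤ m0)
    [SigmaFinite (μ.trim hm)] {f g : Ω → ℝ} (hg : StronglyMeasurable[m] g)
    (hgf : Integrable (g * f) μ) (hf : Integrable f μ) (h : μ[f | m] =ᵐ[μ] 0) :
    ∫ ω, g ω * f ω ∂μ = 0 := by
  change ∫ ω, (g * f) ω ∂μ = 0
  rw [← integral_condExp hm]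
  refine integral_eq_zero_of_ae ?_
  filter_upwards [condExp_mul_of_stronglyMeasurable_left hg hgf hf, h] with ω h1 h2
  rw [h1, Pi.mul_apply, h2, Pi.zero_apply, mul_zero]

theorem condExp_indicator_sub_condExp_ae_eq_zero [IsFiniteMeasure μ] {m : MeasurableSpace Ω}
    (hm : m ≤ m0) {f : Ω → ℝ} (hf : Integrable f μ) {s : Set Ω} (hs : MeasurableSet[m] s) :
    μ[s.indicator (f - μ[f | m]) | m] =ᵐ[μ] 0 := by
  filter_upwards [condExp_indicator (hf.sub (integrable_condExp (m := m) (f := f))) hs,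
    condExp_sub hf (integrable_condExp (m := m) (f := f)) m,
    condExp_condExp_of_le le_rfl hm (f := f) (μ := μ)] with ω h1 h2 h3
  simp [h1, h2, h3]

theorem setIntegral_sq_sub_condExp_le [IsFiniteMeasure μ] {m : MeasurableSpace Ω} (hm : m ≤ m0)
    {f : Ω → ℝ} (hf : MemLp f 2 μ) {s : Set Ω} (hs : MeasurableSet[m] s) :
    ∫ ω in s, (f ω - (μ[f | m]) ω) ^ 2 ∂μ ≤ ∫ ω in s, f ω ^ 2 ∂μ := by
  have hvar : Integrable ((f - μ[f | m]) ^ 2) μ :=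
    (hf.sub (hf.condExp one_le_two)).integrable_sq
  calc ∫ ω in s, (f ω - (μ[f | m]) ω) ^ 2 ∂μ
      = ∫ ω in s, Var[f; μ | m] ω ∂μ := (setIntegral_condVar (hm := hm) hvar hs).symm
    _ ≤ ∫ ω in s, (μ[f ^ 2 | m]) ω ∂μ :=
        setIntegral_mono_ae integrable_condVar.integrableOn integrable_condExp.integrableOn
          (condVar_ae_le_condExp_sq hm hf)
    _ = ∫ ω in s, f ω ^ 2 ∂μ := setIntegral_condExp hm hf.integrable_sq hs

theorem integral_sq_sum_Icc_eq_sum_integral_sq [IsFiniteMeasure μ] {G : ℕ → MeasurableSpace Ω}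
    (hGle : ∀ k, G k ≤ m0) (hG : Monotone G) {V : ℕ → Ω → ℝ}
    (hV : ∀ k, StronglyMeasurable[G k] (V k)) (hV2 : ∀ k, MemLp (V k) 2 μ)
    (hV0 : ∀ k, μ[V k | G (k - 1)] =ᵐ[μ] 0) (K : ℕ) :
    ∫ ω, (∑ k ∈ Finset.Icc 1 K, V k ω) ^ 2 ∂μ = ∑ k ∈ Finset.Icc 1 K, ∫ ω, V k ω ^ 2 ∂μ := by
  induction K with
  | zero => simp
  | succ K ih =>
    have hS : StronglyMeasurable[G K] fun ω => ∑ k ∈ Finset.Icc 1 K, V k ω :=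
      Finset.stronglyMeasurable_fun_sum _ fun k hk => (hV k).mono (hG (Finset.mem_Icc.1 hk).2)
    have hS2 : MemLp (fun ω => ∑ k ∈ Finset.Icc 1 K, V k ω) 2 μ :=
      memLp_finsetSum _ fun k _ => hV2 k
    have hSV := hS2.integrable_mul (hV2 (K + 1))
    have hcross : ∫ ω, (∑ k ∈ Finset.Icc 1 K, V k ω) * V (K + 1) ω ∂μ = 0 :=
      integral_mul_eq_zero_of_condExp_eq_zero (hGle K) hS hSV
        ((hV2 _).integrable one_le_two) (by simpa using hV0 (K + 1))
    have hexp : ∫ ω, (∑ k ∈ Finset.Icc 1 K, V k ω + V (K + 1) ω) ^ 2 ∂μ =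
        ∫ ω, ((∑ k ∈ Finset.Icc 1 K, V k ω) ^ 2 + V (K + 1) ω ^ 2) ∂μ +
          2 * ∫ ω, (∑ k ∈ Finset.Icc 1 K, V k ω) * V (K + 1) ω ∂μ := by
      have h1 : Integrable (fun ω => (∑ k ∈ Finset.Icc 1 K, V k ω) ^ 2 + V (K + 1) ω ^ 2) μ :=
        hS2.integrable_sq.add (hV2 _).integrable_sq
      have h2 : Integrable (fun ω => 2 * ((∑ k ∈ Finset.Icc 1 K, V k ω) * V (K + 1) ω)) μ :=
        hSV.const_mul 2
      rw [← integral_const_mul, ← integral_add h1 h2]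
      congr 1 with ω
      ring
    simp_rw [Finset.sum_Icc_succ_top (Nat.le_add_left 1 K), ← ih]
    rw [hexp, hcross, mul_zero, add_zero, integral_add hS2.integrable_sq (hV2 _).integrable_sq]

theorem ae_sum_sub_condExp_eq_indicator_compl_add_indicator {G : ℕ → MeasurableSpace Ω}
    {Y : ℕ → Ω → ℝ} (hY : ∀ k, Integrable (Y k) μ) {s : ℕ → Set Ω}
    (hs : ∀ k, MeasurableSet (s k)) (K : ℕ) :
    ∀ᵐ ω ∂μ, ∑ k ∈ Finset.Icc 1 K, (Y k ω - (μ[Y k | G (k - 1)]) ω) =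
      ∑ k ∈ Finset.Icc 1 K,
          ((s k)ᶜ.indicator (Y k) ω - (μ[(s k)ᶜ.indicator (Y k) | G (k - 1)]) ω) +
        ∑ k ∈ Finset.Icc 1 K,
          ((s k).indicator (Y k) ω - (μ[(s k).indicator (Y k) | G (k - 1)]) ω) := by
  have hadd : ∀ᵐ ω ∂μ, ∀ k ∈ Finset.Icc 1 K, (μ[Y k | G (k - 1)]) ω =
      (μ[(s k)ᶜ.indicator (Y k) | G (k - 1)]) ω + (μ[(s k).indicator (Y k) | G (k - 1)]) ω :=
    (Finset.eventually_all _).2 fun k _ => by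
      have h := condExp_add (m := G (k - 1)) ((hY k).indicator (hs k).compl)
        ((hY k).indicator (hs k))
      rwa [Set.indicator_compl_add_self] at h
  filter_upwards [hadd] with ω hω
  rw [← Finset.sum_add_distrib]
  refine Finset.sum_congr rfl fun k hk => ?_
  rw [hω k hk, ← congrFun ((s k).indicator_compl_add_self (Y k)) ω, Pi.add_apply]
  ring

end ConditionalExpectation

section Compensator

variable {Ω : Type*} {m0 : MeasurableSpace Ω} {μ : Measure Ω} {G : ℕ → MeasurableSpace Ω}
  {Z : ℕ → Ω → ℝ} {C : ℝ}

noncomputable def compensator (μ : Measure Ω) (G : ℕ → MeasurableSpace Ω) (Z : ℕ → Ω → ℝ)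
    (k : ℕ) (ω : Ω) : ℝ :=
  ∑ j ∈ Finset.Icc 1 k, (μ[Z j | G (j - 1)]) ω

theorem stronglyMeasurable_compensator (hG : Monotone G) (Z : ℕ → Ω → ℝ) (k : ℕ) :
    StronglyMeasurable[G (k - 1)] (compensator μ G Z k) :=
  Finset.stronglyMeasurable_fun_sum _ fun _ hj =>
    stronglyMeasurable_condExp.mono (hG (Nat.sub_le_sub_right (Finset.mem_Icc.1 hj).2 1))

/- `{ω | compensator μ G Z k ω < C}` is the event that the stopping time "first `k` at which the
compensator reaches `C`" has not occurred by `k`; being predictable, cutting the `k`-th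
increment down to it preserves the martingale structure. -/
theorem measurableSet_compensator_lt (hG : Monotone G) (Z : ℕ → Ω → ℝ) (C : ℝ) (k : ℕ) :
    MeasurableSet[G (k - 1)] {ω | compensator μ G Z k ω < C} :=
  (stronglyMeasurable_compensator hG Z k).measurable measurableSet_Iio

theorem ae_forall_condExp_nonneg (hZ : ∀ k, 0 ≤ Z k) (K : ℕ) :
    ∀ᵐ ω ∂μ, ∀ k ∈ Finset.Icc 1 K, 0 ≤ (μ[Z k | G (k - 1)]) ω :=
  (Finset.eventually_all _).2 fun k _ => condExp_nonneg (ae_of_all μ (hZ k))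

theorem compensator_finsetSum_ae_eq {κ : Type*} (s : Finset κ) {Z : κ → ℕ → Ω → ℝ}
    (hZ : ∀ a ∈ s, ∀ k, Integrable (Z a k) μ) (K : ℕ) :
    compensator μ G (fun k => ∑ a ∈ s, Z a k) K =ᵐ[μ]
      fun ω => ∑ a ∈ s, compensator μ G (Z a) K ω := by
  have h : ∀ᵐ ω ∂μ, ∀ k ∈ Finset.Icc 1 K,
      (μ[∑ a ∈ s, Z a k | G (k - 1)]) ω = ∑ a ∈ s, (μ[Z a k | G (k - 1)]) ω :=
    (Finset.eventually_all _).2 fun k _ =>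
      (condExp_finsetSum (fun a ha => hZ a ha k) _).mono fun ω hω => by rw [hω, Finset.sum_apply]
  filter_upwards [h] with ω hω
  simp only [compensator]
  rw [Finset.sum_comm]
  exact Finset.sum_congr rfl hω

theorem sum_indicator_compensator_lt_eq {K : ℕ} {ω : Ω}
    (hc : ∀ k ∈ Finset.Icc 1 K, 0 ≤ (μ[Z k | G (k - 1)]) ω) (hK : compensator μ G Z K ω < C)
    (f : ℕ → Ω → ℝ) :
    ∑ k ∈ Finset.Icc 1 K, {ω | compensator μ G Z k ω < C}.indicator (f k) ω =
      ∑ k ∈ Finset.Icc 1 K, f k ω := by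
  refine Finset.sum_congr rfl fun k hk => Set.indicator_of_mem ?_ _
  exact lt_of_le_of_lt (Finset.sum_le_sum_of_subset_of_nonneg
    (Finset.Icc_subset_Icc le_rfl (Finset.mem_Icc.1 hk).2) fun j hj _ => hc j hj) hK

theorem measureReal_sum_mem_le_compensator_add [IsFiniteMeasure μ] (hZ : ∀ k, 0 ≤ Z k) (K : ℕ)
    (C : ℝ) (f : ℕ → Ω → ℝ) (S : Set ℝ) :
    μ.real {ω | ∑ k ∈ Finset.Icc 1 K, f k ω ∈ S} ≤
      μ.real {ω | C ≤ compensator μ G Z K ω} + μ.real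
        {ω | ∑ k ∈ Finset.Icc 1 K, {ω | compensator μ G Z k ω < C}.indicator (f k) ω ∈ S} := by
  refine (measureReal_mono_ae ?_).trans (measureReal_union_le _ _)
  filter_upwards [ae_forall_condExp_nonneg hZ K] with ω hc hω
  by_cases hK : C ≤ compensator μ G Z K ω
  · exact Or.inl hK
  · exact Or.inr (by rwa [Set.mem_ofPred_eq, sum_indicator_compensator_lt_eq hc (not_le.1 hK)])

theorem sum_setIntegral_compensator_lt_le [IsProbabilityMeasure μ] (hGle : ∀ k, G k ≤ m0)
    (hG : Monotone G) (hZ : ∀ k, 0 ≤ Z k) (hZint : ∀ k, Integrable (Z k) μ) (hC : 0 ≤ C)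
    (K : ℕ) : ∑ k ∈ Finset.Icc 1 K, ∫ ω in {ω | compensator μ G Z k ω < C}, Z k ω ∂μ ≤ C := by
  have hB := measurableSet_compensator_lt (μ := μ) hG Z C
  have hint : ∀ k, Integrable ({ω | compensator μ G Z k ω < C}.indicator (μ[Z k | G (k - 1)])) μ :=
    fun k => integrable_condExp.indicator (hGle _ _ (hB k))
  calc ∑ k ∈ Finset.Icc 1 K, ∫ ω in {ω | compensator μ G Z k ω < C}, Z k ω ∂μ
      = ∫ ω, ∑ k ∈ Finset.Icc 1 K,
          {ω | compensator μ G Z k ω < C}.indicator (μ[Z k | G (k - 1)]) ω ∂μ := by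
        rw [integral_finsetSum _ fun k _ => hint k]
        refine Finset.sum_congr rfl fun k _ => ?_
        rw [integral_indicator (hGle _ _ (hB k)), setIntegral_condExp (hGle _) (hZint k) (hB k)]
    _ ≤ ∫ _, C ∂μ := by
        refine integral_mono_ae (integrable_finsetSum _ fun k _ => hint k) (integrable_const C) ?_
        filter_upwards [ae_forall_condExp_nonneg hZ K] with ω hc
        simpa only [Set.indicator_apply, Set.mem_ofPred_eq, compensator]
          using Finset.sum_Icc_ite_sum_lt_le hC K hc
    _ = C := by simp

/-- Lenglart's inequality. -/
theorem measureReal_sum_ge_le_compensator_add [IsProbabilityMeasure μ] (hGle : ∀ k, G k ≤ m0)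
    (hG : Monotone G) (hZ : ∀ k, 0 ≤ Z k) (hZint : ∀ k, Integrable (Z k) μ) {δ η : ℝ}
    (hδ : 0 < δ) (hη : 0 ≤ η) (K : ℕ) :
    μ.real {ω | δ ≤ ∑ k ∈ Finset.Icc 1 K, Z k ω} ≤
      μ.real {ω | η ≤ compensator μ G Z K ω} + η / δ := by
  have hB := measurableSet_compensator_lt (μ := μ) hG Z η
  have hint : ∀ k, Integrable ({ω | compensator μ G Z k ω < η}.indicator (Z k)) μ :=
    fun k => (hZint k).indicator (hGle _ _ (hB k))
  refine (measureReal_sum_mem_le_compensator_add hZ K η Z (Set.Ici δ)).trans (add_le_add le_rfl ?_)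
  rw [le_div_iff₀ hδ, mul_comm]
  calc δ * μ.real {ω | ∑ k ∈ Finset.Icc 1 K, {ω | compensator μ G Z k ω < η}.indicator (Z k) ω
        ∈ Set.Ici δ}
      ≤ ∫ ω, ∑ k ∈ Finset.Icc 1 K, {ω | compensator μ G Z k ω < η}.indicator (Z k) ω ∂μ :=
        mul_meas_ge_le_integral_of_nonneg (ae_of_all μ fun ω =>
            Finset.sum_nonneg fun k _ => Set.indicator_nonneg (fun ω _ => hZ k ω) ω)
          (integrable_finsetSum _ fun k _ => hint k) δ
    _ = ∑ k ∈ Finset.Icc 1 K, ∫ ω in {ω | compensator μ G Z k ω < η}, Z k ω ∂μ := by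
        rw [integral_finsetSum _ fun k _ => hint k]
        exact Finset.sum_congr rfl fun k _ => integral_indicator (hGle _ _ (hB k))
    _ ≤ η := sum_setIntegral_compensator_lt_le hGle hG hZ hZint hη K

theorem integral_sq_sum_indicator_compensator_lt_le [IsProbabilityMeasure μ]
    (hGle : ∀ k, G k ≤ m0) (hG : Monotone G) {W N : ℕ → Ω → ℝ}
    (hW : ∀ k, StronglyMeasurable[G k] (W k)) (hW2 : ∀ k, MemLp (W k) 2 μ) (hN : ∀ k, 0 ≤ N k)
    (hNint : ∀ k, Integrable (N k) μ) {a : ℝ} (ha : 0 ≤ a) (hWN : ∀ k ω, W k ω ^ 2 ≤ a * N k ω)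
    (hC : 0 ≤ C) (K : ℕ) :
    ∫ ω, (∑ k ∈ Finset.Icc 1 K,
      {ω | compensator μ G N k ω < C}.indicator (W k - μ[W k | G (k - 1)]) ω) ^ 2 ∂μ ≤ a * C := by
  have hB := measurableSet_compensator_lt (μ := μ) hG N C
  have hV : ∀ k, StronglyMeasurable[G k]
      ({ω | compensator μ G N k ω < C}.indicator (W k - μ[W k | G (k - 1)])) := fun k =>
    ((hW k).sub (stronglyMeasurable_condExp.mono (hG (Nat.sub_le k 1)))).indicator
      (hG (Nat.sub_le k 1) _ (hB k))
  rw [integral_sq_sum_Icc_eq_sum_integral_sq hGle hG hV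
    (fun k => ((hW2 k).sub ((hW2 k).condExp one_le_two)).indicator (hGle _ _ (hB k)))
    (fun k => condExp_indicator_sub_condExp_ae_eq_zero (hGle _) ((hW2 k).integrable one_le_two)
      (hB k))]
  refine (Finset.sum_le_sum fun k _ => ?_).trans ((Finset.mul_sum _ _ _).symm.trans_le
    (mul_le_mul_of_nonneg_left (sum_setIntegral_compensator_lt_le hGle hG hN hNint hC K) ha))
  calc ∫ ω, ({ω | compensator μ G N k ω < C}.indicator (W k - μ[W k | G (k - 1)]) ω) ^ 2 ∂μ
      = ∫ ω in {ω | compensator μ G N k ω < C}, (W k ω - (μ[W k | G (k - 1)]) ω) ^ 2 ∂μ := by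
        rw [← integral_indicator (hGle _ _ (hB k))]
        congr 1 with ω
        by_cases hω : ω ∈ {ω | compensator μ G N k ω < C} <;> simp [hω]
    _ ≤ ∫ ω in {ω | compensator μ G N k ω < C}, W k ω ^ 2 ∂μ :=
        setIntegral_sq_sub_condExp_le (hGle _) (hW2 k) (hB k)
    _ ≤ a * ∫ ω in {ω | compensator μ G N k ω < C}, N k ω ∂μ := by
        rw [← integral_const_mul]
        exact setIntegral_mono (hW2 k).integrable_sq.integrableOn
          ((hNint k).const_mul a).integrableOn (hWN k)

theorem measureReal_abs_sum_sub_condExp_ge_le_compensator_add [IsProbabilityMeasure μ]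
    (hGle : ∀ k, G k ≤ m0) (hG : Monotone G) {W N : ℕ → Ω → ℝ}
    (hW : ∀ k, StronglyMeasurable[G k] (W k)) (hN : ∀ k, 0 ≤ N k)
    (hNint : ∀ k, Integrable (N k) μ) {a : ℝ} (ha : 0 ≤ a) (hWN : ∀ k ω, W k ω ^ 2 ≤ a * N k ω)
    {δ : ℝ} (hδ : 0 < δ) (hC : 0 ≤ C) (K : ℕ) :
    μ.real {ω | δ ≤ |∑ k ∈ Finset.Icc 1 K, (W k ω - (μ[W k | G (k - 1)]) ω)|} ≤
      μ.real {ω | C ≤ compensator μ G N K ω} + a * C / δ ^ 2 := by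
  have hW2 : ∀ k, MemLp (W k) 2 μ := fun k =>
    (memLp_two_iff_integrable_sq ((hW k).mono (hGle k)).aestronglyMeasurable).2 <|
      ((hNint k).const_mul a).mono' (((hW k).mono (hGle k)).aestronglyMeasurable.pow 2)
        (ae_of_all μ fun ω => (Real.norm_of_nonneg (sq_nonneg _)).trans_le (hWN k ω))
  refine (measureReal_sum_mem_le_compensator_add hN K C (fun k => W k - μ[W k | G (k - 1)])
    {x | δ ≤ |x|}).trans (add_le_add le_rfl ?_)
  exact (measureReal_abs_ge_le_integral_sq_div (memLp_finsetSum _ fun k _ =>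
    ((hW2 k).sub ((hW2 k).condExp one_le_two)).indicator
      (hGle _ _ (measurableSet_compensator_lt hG N C k))).integrable_sq hδ).trans
    (div_le_div_of_nonneg_right
      (integral_sq_sum_indicator_compensator_lt_le hGle hG hW hW2 hN hNint ha hWN hC K)
      (by positivity))

theorem compensator_norm_sq_ae_eq_sum {κ : Type*} [Fintype κ] (X : ℕ → Ω → EuclideanSpace ℝ κ)
    (hX : ∀ a k, Integrable (fun ω => X k ω a * X k ω a) μ) (K : ℕ) :
    compensator μ G (fun k ω => ‖X k ω‖ ^ 2) K =ᵐ[μ]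
      fun ω => ∑ a, compensator μ G (fun k ω => X k ω a * X k ω a) K ω := by
  have hsq : (fun k ω => ‖X k ω‖ ^ 2) = fun k => ∑ a, fun ω => X k ω a * X k ω a := by
    ext k ω
    rw [Finset.sum_apply, EuclideanSpace.real_norm_sq_eq]
    exact Finset.sum_congr rfl fun a _ => sq _
  rw [hsq]
  exact compensator_finsetSum_ae_eq _ (fun a _ k => hX a k) K

end Compensator

section TriangularArray

variable {Ω ι : Type*} {m0 : MeasurableSpace Ω} {μ : Measure Ω} [IsProbabilityMeasure μ]
  {l : Filter ι} {𝓕 : ι → ℕ → MeasurableSpace Ω} {kn : ι → ℕ}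

theorem tendstoInMeasure_sum_zero_of_compensator (hFle : ∀ n k, 𝓕 n k ≤ m0)
    (hF : ∀ n, Monotone (𝓕 n)) {Z : ι → ℕ → Ω → ℝ} (hZ : ∀ n k, 0 ≤ Z n k)
    (hZint : ∀ n k, Integrable (Z n k) μ)
    (h : TendstoInMeasure μ (fun n => compensator μ (𝓕 n) (Z n) (kn n)) l (fun _ => 0)) :
    TendstoInMeasure μ (fun n ω => ∑ k ∈ Finset.Icc 1 (kn n), Z n k ω) l (fun _ => 0) := by
  rw [tendstoInMeasure_zero_iff_measureReal_abs] at h ⊢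
  intro δ hδ ρ hρ
  filter_upwards [h (ρ * δ / 2) (by positivity) (ρ / 2) (half_pos hρ)] with n hn
  have hsum : ∀ ω, |∑ k ∈ Finset.Icc 1 (kn n), Z n k ω| = ∑ k ∈ Finset.Icc 1 (kn n), Z n k ω :=
    fun ω => abs_of_nonneg (Finset.sum_nonneg fun k _ => hZ n k ω)
  calc μ.real {ω | δ ≤ |∑ k ∈ Finset.Icc 1 (kn n), Z n k ω|}
      ≤ μ.real {ω | ρ * δ / 2 ≤ compensator μ (𝓕 n) (Z n) (kn n) ω} + ρ * δ / 2 / δ := by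
        simp_rw [hsum]
        exact measureReal_sum_ge_le_compensator_add (hFle n) (hF n) (hZ n) (hZint n) hδ
          (by positivity) (kn n)
    _ ≤ μ.real {ω | ρ * δ / 2 ≤ |compensator μ (𝓕 n) (Z n) (kn n) ω|} + ρ / 2 := by
        refine add_le_add (measureReal_mono
          (Set.ofPred_subset_ofPred.2 fun ω hω => hω.trans (le_abs_self _))) ?_
        field_simp
        rfl
    _ < ρ := by linarith

theorem tendstoInMeasure_sum_sub_condExp_zero_of_abs_le (hFle : ∀ n k, 𝓕 n k ≤ m0)
    (hF : ∀ n, Monotone (𝓕 n)) {Y Z : ι → ℕ → Ω → ℝ} (hY : ∀ n k, Integrable (Y n k) μ)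
    (hZ : ∀ n k, Integrable (Z n k) μ) (hYZ : ∀ n k ω, |Y n k ω| ≤ Z n k ω)
    (h : TendstoInMeasure μ (fun n => compensator μ (𝓕 n) (Z n) (kn n)) l (fun _ => 0)) :
    TendstoInMeasure μ
      (fun n ω => ∑ k ∈ Finset.Icc 1 (kn n), (Y n k ω - (μ[Y n k | 𝓕 n (k - 1)]) ω)) l
      (fun _ => 0) := by
  have hZ0 : ∀ n k, 0 ≤ Z n k := fun n k ω => (abs_nonneg _).trans (hYZ n k ω)
  have hsum := (tendstoInMeasure_sum_zero_of_compensator hFle hF hZ0 hZ h).add h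
  refine (hsum.congr_right (ae_of_all μ fun _ => add_zero 0)).of_ae_abs_le fun n => ?_
  have hcond : ∀ᵐ ω ∂μ, ∀ k ∈ Finset.Icc 1 (kn n),
      |(μ[Y n k | 𝓕 n (k - 1)]) ω| ≤ (μ[Z n k | 𝓕 n (k - 1)]) ω :=
    (Finset.eventually_all _).2 fun k _ => by
      filter_upwards [abs_condExp_ae_le_condExp_abs (m := 𝓕 n (k - 1)) (μ := μ) (Y n k),
        condExp_mono (m := 𝓕 n (k - 1)) (hY n k).abs (hZ n k) (ae_of_all μ (hYZ n k))]
        with ω h1 h2 using h1.trans h2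
  filter_upwards [hcond] with ω hω
  calc |∑ k ∈ Finset.Icc 1 (kn n), (Y n k ω - (μ[Y n k | 𝓕 n (k - 1)]) ω)|
      ≤ ∑ k ∈ Finset.Icc 1 (kn n), (Z n k ω + (μ[Z n k | 𝓕 n (k - 1)]) ω) :=
        (Finset.abs_sum_le_sum_abs _ _).trans <| Finset.sum_le_sum fun k hk =>
          (abs_sub _ _).trans (add_le_add (hYZ n k ω) (hω k hk))
    _ = _ := Finset.sum_add_distrib

theorem tendstoInMeasure_sum_sub_condExp_zero [l.NeBot] [l.IsCountablyGenerated]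
    (hFle : ∀ n k, 𝓕 n k ≤ m0) (hF : ∀ n, Monotone (𝓕 n)) {Y N : ι → ℕ → Ω → ℝ}
    (hY : ∀ n k, StronglyMeasurable[𝓕 n k] (Y n k))
    (hN : ∀ n k, StronglyMeasurable[𝓕 n k] (N n k)) (hNint : ∀ n k, Integrable (N n k) μ)
    (hYN : ∀ n k ω, |Y n k ω| ≤ N n k ω)
    (hLind : ∀ ε > 0, TendstoInMeasure μ
      (fun n => compensator μ (𝓕 n) (fun k => {ω | ε ≤ N n k ω}.indicator (N n k)) (kn n)) l
      (fun _ => 0))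
    {L : Ω → ℝ} (hnorm : TendstoInMeasure μ (fun n => compensator μ (𝓕 n) (N n) (kn n)) l L) :
    TendstoInMeasure μ
      (fun n ω => ∑ k ∈ Finset.Icc 1 (kn n), (Y n k ω - (μ[Y n k | 𝓕 n (k - 1)]) ω)) l
      (fun _ => 0) := by
  have hYint : ∀ n k, Integrable (Y n k) μ := fun n k =>
    (hNint n k).mono' ((hY n k).mono (hFle n k)).aestronglyMeasurable (ae_of_all μ (hYN n k))
  have hlarge : ∀ ε n k, MeasurableSet[𝓕 n k] {ω | ε ≤ N n k ω} := fun ε n k =>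
    measurableSet_le measurable_const (hN n k).measurable
  rw [tendstoInMeasure_zero_iff_measureReal_abs]
  intro δ hδ ρ hρ
  obtain ⟨C, hC, hCev⟩ := hnorm.exists_eventually_measureReal_ge_lt (fun n =>
    ((stronglyMeasurable_compensator (hF n) (N n) (kn n)).mono (hFle n _)).aestronglyMeasurable)
    (by positivity : 0 < ρ / 3)
  obtain ⟨ε, hε, hεC⟩ : ∃ ε > 0, ε * C / (δ / 2) ^ 2 = ρ / 3 :=
    ⟨ρ * δ ^ 2 / (12 * C), by positivity, by field_simp; ring⟩
  have hlargeSum := tendstoInMeasure_zero_iff_measureReal_abs.1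
    (tendstoInMeasure_sum_sub_condExp_zero_of_abs_le hFle hF
      (Y := fun n k => {ω | ε ≤ N n k ω}.indicator (Y n k))
      (fun n k => (hYint n k).indicator (hFle n k _ (hlarge ε n k)))
      (fun n k => (hNint n k).indicator (hFle n k _ (hlarge ε n k)))
      (fun n k ω => by by_cases h : ε ≤ N n k ω <;> simp [h, hYN n k ω]) (hLind ε hε))
    (δ / 2) (by positivity) (ρ / 3) (by positivity)
  filter_upwards [hCev, hlargeSum] with n hCn hLn
  have hsmallSum := measureReal_abs_sum_sub_condExp_ge_le_compensator_add (hFle n) (hF n)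
    (W := fun k => {ω | ε ≤ N n k ω}ᶜ.indicator (Y n k))
    (fun k => (hY n k).indicator (hlarge ε n k).compl)
    (fun k ω => (abs_nonneg _).trans (hYN n k ω)) (hNint n) hε.le
    (fun k => sq_indicator_compl_le_mul (hYN n k) hε.le) (half_pos hδ) hC.le (kn n)
  calc _ ≤ _ := measureReal_abs_ge_le_of_ae_eq_add
        (ae_sum_sub_condExp_eq_indicator_compl_add_indicator (hYint n)
          (fun k => hFle n k _ (hlarge ε n k)) (kn n)) δ
    _ < ρ := by linarith

end TriangularArray

end MeasureTheory

theorem stmt5_general {Ω : Type*} {m0 : MeasurableSpace Ω} (μ : Measure Ω) [IsProbabilityMeasure μ]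
    {d : ℕ} (kn : ℕ → ℕ)
    (𝓕 : ℕ → ℕ → MeasurableSpace Ω)
    (hFmono : ∀ n, Monotone (𝓕 n)) (hFle : ∀ n k, 𝓕 n k ≤ m0)
    (X : ℕ → ℕ → Ω → EuclideanSpace ℝ (Fin d))
    (hadapted : ∀ n k, StronglyMeasurable[𝓕 n k] (X n k))
    (hL2 : ∀ n k, MemLp (X n k) 2 μ)
    (hCLB : ∀ ε > (0 : ℝ), TendstoInMeasure μ
      (fun n ω => ∑ k ∈ Finset.Icc 1 (kn n),
        (μ[Set.indicator {ω'' | ε ≤ ‖X n k ω''‖} (fun ω'' => ‖X n k ω''‖ ^ 2) | 𝓕 n (k - 1)]) ω)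
      atTop (fun _ => 0))
    (A : Ω → Matrix (Fin d) (Fin d) ℝ)
    (hN : ∀ i j : Fin d, TendstoInMeasure μ
      (fun n ω => ∑ k ∈ Finset.Icc 1 (kn n),
        (μ[fun ω' => X n k ω' i * X n k ω' j | 𝓕 n (k - 1)]) ω)
      atTop (fun ω => A ω i j)) :
    ∀ i j : Fin d, TendstoInMeasure μ
      (fun n ω => ∑ k ∈ Finset.Icc 1 (kn n), X n k ω i * X n k ω j)
      atTop (fun ω => A ω i j) := by
  intro i j
  have hcoord : ∀ a n k, StronglyMeasurable[𝓕 n k] fun ω => X n k ω a := fun a n k =>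
    (EuclideanSpace.proj a).continuous.comp_stronglyMeasurable (hadapted n k)
  have hcoordL2 : ∀ a n k, MemLp (fun ω => X n k ω a) 2 μ := fun a n k =>
    ContinuousLinearMap.comp_memLp' (EuclideanSpace.proj (𝕜 := ℝ) a) (hL2 n k)
  have hnorm : TendstoInMeasure μ
      (fun n => compensator μ (𝓕 n) (fun k ω => ‖X n k ω‖ ^ 2) (kn n)) atTop
      (fun ω => ∑ a, A ω a a) :=
    TendstoInMeasure.congr_left (fun n => (compensator_norm_sq_ae_eq_sum _
      (fun a k => (hcoordL2 a n k).integrable_mul (hcoordL2 a n k)) (kn n)).symm)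
      (TendstoInMeasure.finsetSum Finset.univ fun a _ => hN a a)
  have hLind : ∀ ε > (0 : ℝ), TendstoInMeasure μ (fun n => compensator μ (𝓕 n)
      (fun k => {ω | ε ≤ ‖X n k ω‖ ^ 2}.indicator fun ω => ‖X n k ω‖ ^ 2) (kn n)) atTop
      (fun _ => 0) := fun ε hε => by
    have h := hCLB √ε (Real.sqrt_pos.2 hε)
    simp only [Real.sqrt_le_left (norm_nonneg _)] at h
    exact h
  have hS := tendstoInMeasure_sum_sub_condExp_zero hFle hFmono
    (Y := fun n k ω => X n k ω i * X n k ω j) (N := fun n k ω => ‖X n k ω‖ ^ 2)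
    (fun n k => (hcoord i n k).mul (hcoord j n k)) (fun n k => (hadapted n k).norm.pow 2)
    (fun n k => (hL2 n k).norm.integrable_sq)
    (fun n k ω => EuclideanSpace.abs_mul_apply_le_norm_sq _ i j) hLind hnorm
  refine TendstoInMeasure.congr (fun n => ae_of_all μ fun ω => ?_)
    (ae_of_all μ fun ω => zero_add _) (hS.add (hN i j))
  simp only [← Finset.sum_add_distrib, sub_add_cancel]

/-- For a square-integrable adapted triangular array, the conditional Lindeberg condition (CLB^d)
together with the norming condition (N^d) (convergence in probability of the sums of conditional
covariance matrices to a random psd matrix `A`) implies Raikov's condition (R^d):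
`∑_k X_{nk} X_{nk}ᵀ → A` in probability (entrywise). -/
theorem stmt5 {Ω : Type*} {m0 : MeasurableSpace Ω} (μ : Measure Ω) [IsProbabilityMeasure μ]
    {d : ℕ} (kn : ℕ → ℕ)
    (𝓕 : ℕ → ℕ → MeasurableSpace Ω)
    (hFmono : ∀ n, Monotone (𝓕 n)) (hFle : ∀ n k, 𝓕 n k ≤ m0)
    (X : ℕ → ℕ → Ω → EuclideanSpace ℝ (Fin d))
    (hadapted : ∀ n k, StronglyMeasurable[𝓕 n k] (X n k))
    (hL2 : ∀ n k, MemLp (X n k) 2 μ)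
    (hCLB : ∀ ε > (0 : ℝ), TendstoInMeasure μ
      (fun n ω => ∑ k ∈ Finset.Icc 1 (kn n),
        (μ[Set.indicator {ω'' | ε ≤ ‖X n k ω''‖} (fun ω'' => ‖X n k ω''‖ ^ 2) | 𝓕 n (k - 1)]) ω)
      atTop (fun _ => 0))
    (A : Ω → Matrix (Fin d) (Fin d) ℝ) (hAmeas : ∀ i j : Fin d, Measurable (fun ω => A ω i j))
    (hApsd : ∀ ω, (A ω).PosSemidef)
    (hN : ∀ i j : Fin d, TendstoInMeasure μ
      (fun n ω => ∑ k ∈ Finset.Icc 1 (kn n),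
        (μ[fun ω' => X n k ω' i * X n k ω' j | 𝓕 n (k - 1)]) ω)
      atTop (fun ω => A ω i j)) :
    ∀ i j : Fin d, TendstoInMeasure μ
      (fun n ω => ∑ k ∈ Finset.Icc 1 (kn n), X n k ω i * X n k ω j)
      atTop (fun ω => A ω i j) :=
  stmt5_general μ kn 𝓕 hFmono hFle X hadapted hL2 hCLB A hN
end

section
/- For real numbers x₁,…,x_d and ε > 0, the deterministic inequality (∑_{j=1}^d x_j²) · 1_{{∑_{j=1}^d x_j² ≥ ε²}} ≤ 2d ∑_{j=1}^d x_j² 1_{{|x_j| ≥ ε/√d}} holds. -/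
/-- The key deterministic inequality: for reals `x₁,…,x_d` and `ε > 0`,
`(∑ x_j²)·1_{∑ x_j² ≥ ε²} ≤ 2d ∑_j x_j² 1_{|x_j| ≥ ε/√d}`. -/
theorem stmt10 {d : ℕ} (x : Fin d → ℝ) (ε : ℝ) (hε : 0 < ε) :
    (if ε ^ 2 ≤ ∑ j, x j ^ 2 then ∑ j, x j ^ 2 else 0)
      ≤ 2 * d * ∑ j, (if ε / Real.sqrt d ≤ |x j| then x j ^ 2 else 0) := by
  rcases Nat.eq_zero_or_pos d with hd | hd
  · subst hd
    simp only [Finset.univ_eq_empty, Finset.sum_empty, Nat.cast_zero, mul_zero, zero_mul]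
    split_ifs with h
    · nlinarith
    · exact le_refl 0
  have hdR : (0:ℝ) < d := by exact_mod_cast hd
  set S : ℝ := ∑ j, (if ε / Real.sqrt d ≤ |x j| then x j ^ 2 else 0) with hS
  have hSnn : 0 ≤ S := Finset.sum_nonneg fun j _ => by positivity
  split_ifs with h
  · -- there exists ℓ with x ℓ ^ 2 ≥ ε²/d
    obtain ⟨ℓ, hℓ⟩ : ∃ ℓ, ε ^ 2 / d ≤ x ℓ ^ 2 := by
      by_contra hc
      push_neg at hc
      have hne : (Finset.univ : Finset (Fin d)).Nonempty :=
        @Finset.univ_nonempty (Fin d) _ (Fin.pos_iff_nonempty.mp hd)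
      have : ∑ j, x j ^ 2 < ∑ _j : Fin d, ε ^ 2 / d :=
        Finset.sum_lt_sum_of_nonempty hne fun j _ => hc j
      rw [Finset.sum_const, Finset.card_univ, Fintype.card_fin, nsmul_eq_mul] at this
      rw [mul_div_cancel₀ _ (ne_of_gt hdR)] at this
      linarith
    have hℓabs : ε / Real.sqrt d ≤ |x ℓ| := by
      have hpos : 0 < ε / Real.sqrt d := div_pos hε (Real.sqrt_pos.mpr hdR)
      have hsq : (ε / Real.sqrt d) ^ 2 ≤ |x ℓ| ^ 2 := by
        rw [div_pow, Real.sq_sqrt hdR.le, sq_abs]; exact hℓ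
      nlinarith [abs_nonneg (x ℓ)]
    have hterm : ∀ j, x j ^ 2 ≤
        (if ε / Real.sqrt d ≤ |x j| then x j ^ 2 else 0) +
        (if ε / Real.sqrt d ≤ |x ℓ| then x ℓ ^ 2 else 0) := by
      intro j
      rw [if_pos hℓabs]
      by_cases hj : ε / Real.sqrt d ≤ |x j|
      · rw [if_pos hj]; nlinarith
      · rw [if_neg hj]
        push_neg at hj
        have : x j ^ 2 < ε ^ 2 / d := by
          have habs : |x j| < ε / Real.sqrt d := hj
          have h2 : (ε / Real.sqrt d) ^ 2 = ε ^ 2 / d := by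
            rw [div_pow, Real.sq_sqrt hdR.le]
          nlinarith [abs_nonneg (x j), sq_abs (x j)]
        linarith
    have hsum : ∑ j, x j ^ 2 ≤ S + d * x ℓ ^ 2 := by
      calc ∑ j, x j ^ 2 ≤ ∑ j, ((if ε / Real.sqrt d ≤ |x j| then x j ^ 2 else 0) +
          (if ε / Real.sqrt d ≤ |x ℓ| then x ℓ ^ 2 else 0)) :=
            Finset.sum_le_sum fun j _ => hterm j
        _ = S + d * x ℓ ^ 2 := by
            rw [Finset.sum_add_distrib, Finset.sum_const, Finset.card_univ,
              Fintype.card_fin, nsmul_eq_mul, if_pos hℓabs]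
    have hℓS : x ℓ ^ 2 ≤ S := by
      have := Finset.single_le_sum (f := fun j => (if ε / Real.sqrt d ≤ |x j| then x j ^ 2 else 0))
        (fun j _ => by positivity) (Finset.mem_univ ℓ)
      simp only [if_pos hℓabs] at this
      exact this
    have hd1 : (1:ℝ) ≤ d := by exact_mod_cast hd
    nlinarith
  · positivity
end
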